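/- arXiv:1603.07301 — 3 statements merged into one kernel-verified Lean document; each statement's English description precedes it below -/
import Mathlib

section
/- Under Assumptions 1 and 2, the sequence of gradient norms (‖∇F_n(h_n)‖)_{n≥1} evaluated along the MM subspace iterates is square-summable, i.e. ∑_{n=1}^{∞} ‖∇F_n(h_n)‖² < ∞. -/
open Matrix Filter Topology

noncomputable section

/-- Identification of `EuclideanSpace ℝ (Fin N)` with plain tuples `Fin N → ℝ`. -/
def toEuc {N : ℕ} (v : Fin N → ℝ) : EuclideanSpace ℝ (Fin N) :=
  (WithLp.equiv 2 (Fin N → ℝ)).symm v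

def ofEuc {N : ℕ} (v : EuclideanSpace ℝ (Fin N)) : Fin N → ℝ :=
  WithLp.equiv 2 (Fin N → ℝ) v

/-- The quadratic form `vᵀ M v`. -/
def qf {N : ℕ} (M : Matrix (Fin N) (Fin N) ℝ)
    (v : EuclideanSpace ℝ (Fin N)) : ℝ :=
  ofEuc v ⬝ᵥ M.mulVec (ofEuc v)

/-- Matrix-vector product `M v`, viewed in `EuclideanSpace`. -/
def mulE {N : ℕ} (M : Matrix (Fin N) (Fin N) ℝ)
    (v : EuclideanSpace ℝ (Fin N)) : EuclideanSpace ℝ (Fin N) :=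
  toEuc (M.mulVec (ofEuc v))

/-- The range of the matrix `D`, i.e. `{D u : u ∈ ℝ^M}`, as a subset of `EuclideanSpace`. -/
def rangeD {N M : ℕ} (D : Matrix (Fin N) (Fin M) ℝ) : Set (EuclideanSpace ℝ (Fin N)) :=
  {x | ∃ u : Fin M → ℝ, x = toEuc (D.mulVec u)}

open scoped Classical in
/-- The Moore–Penrose pseudo-inverse of a real matrix, defined via its characterizing
(Penrose) equations; it exists and is unique for every real matrix. -/
def pinv {m n : ℕ} (A : Matrix (Fin m) (Fin n) ℝ) : Matrix (Fin n) (Fin m) ℝ :=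
  if h : ∃ B : Matrix (Fin n) (Fin m) ℝ,
      A * B * A = A ∧ B * A * B = B ∧ (A * B)ᵀ = A * B ∧ (B * A)ᵀ = B * A
  then h.choose else 0

end


section MMhelpers
variable {N : ℕ}

lemma ofEuc_sub' (a b : EuclideanSpace ℝ (Fin N)) : ofEuc (a - b) = ofEuc a - ofEuc b := rfl
lemma ofEuc_smul' (t : ℝ) (a : EuclideanSpace ℝ (Fin N)) : ofEuc (t • a) = t • ofEuc a := rfl

lemma dot_eq_inner (a b : EuclideanSpace ℝ (Fin N)) :
    ofEuc a ⬝ᵥ ofEuc b = (inner ℝ a b : ℝ) := by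
  simp [dotProduct, PiLp.inner_apply, RCLike.inner_apply, ofEuc, mul_comm]

lemma norm_sq_eq_dot (a : EuclideanSpace ℝ (Fin N)) :
    ‖a‖^2 = ofEuc a ⬝ᵥ ofEuc a := by
  rw [dot_eq_inner, real_inner_self_eq_norm_sq]

lemma qf_add (M M' : Matrix (Fin N) (Fin N) ℝ) (x : EuclideanSpace ℝ (Fin N)) :
    qf (M + M') x = qf M x + qf M' x := by
  simp [qf, Matrix.add_mulVec, dotProduct_add]

lemma qf_smul (M : Matrix (Fin N) (Fin N) ℝ) (t : ℝ) (x : EuclideanSpace ℝ (Fin N)) :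
    qf M (t • x) = t^2 * qf M x := by
  have : ofEuc (t • x) = t • ofEuc x := rfl
  simp [qf, this, Matrix.mulVec_smul, smul_dotProduct, dotProduct_smul]
  ring

lemma coord_abs_le_norm (x : EuclideanSpace ℝ (Fin N)) (i : Fin N) :
    |ofEuc x i| ≤ ‖x‖ := by
  have h0 : (ofEuc x i)^2 ≤ ∑ j, ‖x j‖^2 := by
    have := Finset.single_le_sum (f := fun j => ‖x j‖^2) (fun j _ => sq_nonneg _) (Finset.mem_univ i)
    simpa [ofEuc, Real.norm_eq_abs, sq_abs] using this
  rw [EuclideanSpace.norm_eq]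
  exact Real.abs_le_sqrt h0

lemma abs_qf_le (M : Matrix (Fin N) (Fin N) ℝ) (x : EuclideanSpace ℝ (Fin N)) :
    |qf M x| ≤ (∑ i, ∑ j, |M i j|) * ‖x‖^2 := by
  have h1 : qf M x = ∑ i, ∑ j, ofEuc x i * (M i j * ofEuc x j) := by
    simp [qf, dotProduct, Matrix.mulVec, Finset.mul_sum]
  rw [h1]
  calc |∑ i, ∑ j, ofEuc x i * (M i j * ofEuc x j)|
      ≤ ∑ i, ∑ j, |ofEuc x i * (M i j * ofEuc x j)| := by
        refine (Finset.abs_sum_le_sum_abs _ _).trans ?_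
        exact Finset.sum_le_sum fun i _ => Finset.abs_sum_le_sum_abs _ _
    _ ≤ ∑ i, ∑ j, |M i j| * ‖x‖^2 := by
        refine Finset.sum_le_sum fun i _ => Finset.sum_le_sum fun j _ => ?_
        rw [abs_mul, abs_mul]
        calc |ofEuc x i| * (|M i j| * |ofEuc x j|) ≤ ‖x‖ * (|M i j| * ‖x‖) := by
              gcongr
              · exact coord_abs_le_norm x i
              · exact coord_abs_le_norm x j
          _ = |M i j| * ‖x‖^2 := by ring
    _ = (∑ i, ∑ j, |M i j|) * ‖x‖^2 := by rw [Finset.sum_mul]; congr 1; ext i; rw [Finset.sum_mul]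

lemma psd_qf_nonneg {M : Matrix (Fin N) (Fin N) ℝ} (hM : M.PosSemidef)
    (x : EuclideanSpace ℝ (Fin N)) : 0 ≤ qf M x := by
  have := hM.dotProduct_mulVec_nonneg (ofEuc x)
  simpa [qf] using this

lemma qf_continuous (M : Matrix (Fin N) (Fin N) ℝ) :
    Continuous (qf M) := by
  have hc : Continuous fun v : EuclideanSpace ℝ (Fin N) => (ofEuc v : Fin N → ℝ) :=
    PiLp.continuous_ofLp (p := 2) (β := fun _ : Fin N => ℝ)
  unfold qf dotProduct Matrix.mulVec
  simp only [dotProduct]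
  exact continuous_finset_sum _ fun i _ =>
    ((continuous_apply i).comp hc).mul
      (continuous_finset_sum _ fun j _ => continuous_const.mul ((continuous_apply j).comp hc))

lemma posdef_qf_lower (hN : 0 < N) (R : Matrix (Fin N) (Fin N) ℝ) (hR : R.PosDef) :
    ∃ μ > 0, ∀ x : EuclideanSpace ℝ (Fin N), μ * ‖x‖^2 ≤ qf R x := by
  haveI : Nonempty (Fin N) := ⟨⟨0, hN⟩⟩
  have hsph : (Metric.sphere (0:EuclideanSpace ℝ (Fin N)) 1).Nonempty :=
    NormedSpace.sphere_nonempty.mpr zero_le_one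
  obtain ⟨x0, hx0mem, hmin⟩ :=
    (isCompact_sphere (0:EuclideanSpace ℝ (Fin N)) 1).exists_isMinOn hsph
      (qf_continuous R).continuousOn
  have hx0 : x0 ≠ 0 := by
    intro hh
    rw [hh] at hx0mem
    simp at hx0mem
  have hpos : 0 < qf R x0 := by
    have hne : ofEuc x0 ≠ 0 := fun hc => hx0 (congrArg toEuc hc)
    simpa [qf] using hR.dotProduct_mulVec_pos hne
  refine ⟨qf R x0, hpos, fun x => ?_⟩
  rcases eq_or_ne x 0 with rfl | hx
  · simp [qf, ofEuc]
  · have hy : (‖x‖⁻¹ • x) ∈ Metric.sphere (0:EuclideanSpace ℝ (Fin N)) 1 := by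
      simp [norm_smul, norm_inv, inv_mul_cancel₀ (norm_ne_zero_iff.mpr hx)]
    have hmin' : qf R x0 ≤ qf R (‖x‖⁻¹ • x) := hmin hy
    have hxx : x = ‖x‖ • (‖x‖⁻¹ • x) := by
      rw [smul_smul, mul_inv_cancel₀ (norm_ne_zero_iff.mpr hx), one_smul]
    calc qf R x0 * ‖x‖^2 ≤ qf R (‖x‖⁻¹ • x) * ‖x‖^2 := by
          nlinarith [sq_nonneg ‖x‖, hmin']
      _ = qf R x := by
          conv_rhs => rw [hxx, qf_smul]
          ring

lemma abs_le_of_summable_diff (c : ℕ → ℝ) (hs : Summable fun n => |c n - c (n+1)|) (n : ℕ) :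
    |c n| ≤ |c 0| + ∑' k, |c k - c (k+1)| := by
  have ht : c 0 - c n = ∑ k ∈ Finset.range n, (c k - c (k+1)) := (Finset.sum_range_sub' c n).symm
  have h1 : |c 0 - c n| ≤ ∑ k ∈ Finset.range n, |c k - c (k+1)| := by
    rw [ht]; exact Finset.abs_sum_le_sum_abs _ _
  have h2 : ∑ k ∈ Finset.range n, |c k - c (k+1)| ≤ ∑' k, |c k - c (k+1)| :=
    hs.sum_le_tsum _ (fun k _ => abs_nonneg _)
  have h3 : |c n| - |c 0| ≤ |c n - c 0| := abs_sub_abs_le_abs_sub _ _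
  rw [abs_sub_comm] at h3
  linarith

lemma norm_le_of_summable_diff {E : Type*} [NormedAddCommGroup E] (c : ℕ → E)
    (hs : Summable fun n => ‖c n - c (n+1)‖) (n : ℕ) :
    ‖c n‖ ≤ ‖c 0‖ + ∑' k, ‖c k - c (k+1)‖ := by
  have ht : c 0 - c n = ∑ k ∈ Finset.range n, (c k - c (k+1)) := (Finset.sum_range_sub' c n).symm
  have h1 : ‖c 0 - c n‖ ≤ ∑ k ∈ Finset.range n, ‖c k - c (k+1)‖ := by
    rw [ht]; exact norm_sum_le _ _
  have h2 : ∑ k ∈ Finset.range n, ‖c k - c (k+1)‖ ≤ ∑' k, ‖c k - c (k+1)‖ :=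
    hs.sum_le_tsum _ (fun k _ => norm_nonneg _)
  have h3 : ‖c n‖ - ‖c 0‖ ≤ ‖c n - c 0‖ := norm_sub_norm_le _ _
  rw [norm_sub_rev] at h3
  linarith

end MMhelpers

set_option maxHeartbeats 2000000 in
theorem mm_gradient_square_summable
    {N : ℕ} (hN : 0 < N)
    (R : Matrix (Fin N) (Fin N) ℝ) (hRpd : R.PosDef)
    (r : EuclideanSpace ℝ (Fin N))
    (Ψ : EuclideanSpace ℝ (Fin N) → ℝ)
    (hΨbdd : BddBelow (Set.range Ψ))
    (hΨconv : ConvexOn ℝ Set.univ Ψ)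
    (hΨC2 : ContDiff ℝ 2 Ψ)
    (gradΨ : EuclideanSpace ℝ (Fin N) → EuclideanSpace ℝ (Fin N))
    (hgradΨ : ∀ x, HasGradientAt Ψ (gradΨ x) x)
    (hessΨ : EuclideanSpace ℝ (Fin N) → Matrix (Fin N) (Fin N) ℝ)
    (hhessΨ : ∀ x, HasFDerivAt gradΨ
      (LinearMap.toContinuousLinearMap (Matrix.toEuclideanLin (hessΨ x))) x)
    (F : EuclideanSpace ℝ (Fin N) → ℝ)
    (hF : ∀ x, F x = (1/2) * qf R x - ofEuc r ⬝ᵥ ofEuc x + Ψ x)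
    (Rn : ℕ → Matrix (Fin N) (Fin N) ℝ) (hRnpsd : ∀ n, (Rn n).PosSemidef)
    (rn : ℕ → EuclideanSpace ℝ (Fin N))
    (Fn : ℕ → EuclideanSpace ℝ (Fin N) → ℝ)
    (hFn : ∀ n x, Fn n x = (1/2) * qf (Rn n) x - ofEuc (rn n) ⬝ᵥ ofEuc x + Ψ x)
    (B : EuclideanSpace ℝ (Fin N) → Matrix (Fin N) (Fin N) ℝ)
    (hBpsd : ∀ x, (B x).PosSemidef)
    (An : ℕ → EuclideanSpace ℝ (Fin N) → Matrix (Fin N) (Fin N) ℝ)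
    (hAn : ∀ n x, An n x = Rn n + B x)
    (gradFn : ℕ → EuclideanSpace ℝ (Fin N) → EuclideanSpace ℝ (Fin N))
    (hgradFn : ∀ n x, HasGradientAt (Fn n) (gradFn n x) x)
    (Θ : ℕ → EuclideanSpace ℝ (Fin N) → EuclideanSpace ℝ (Fin N) → ℝ)
    (hΘ : ∀ n x y, Θ n x y =
      Fn n y + ofEuc (gradFn n y) ⬝ᵥ ofEuc (x - y) + (1/2) * qf (An n y) (x - y))
    (M : ℕ → ℕ) (D : (n : ℕ) → Matrix (Fin N) (Fin (M n)) ℝ)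
    (h : ℕ → EuclideanSpace ℝ (Fin N))
    (halg : ∀ n, h (n+1) ∈ rangeD (D n) ∧
      ∀ y ∈ rangeD (D n), Θ n (h (n+1)) (h n) ≤ Θ n y (h n))
    (hmaj : ∀ n x, Fn n x ≤ Θ n x (h n))
    (ha1r : Summable (fun n => ‖rn n - rn (n+1)‖))
    (ha1R : ∀ i j, Summable (fun n => |Rn n i j - Rn (n+1) i j|))
    (ha1rlim : Tendsto rn atTop (𝓝 r))
    (ha1Rlim : ∀ i j, Tendsto (fun n => Rn n i j) atTop (𝓝 (R i j)))
    (ha2i : ∀ n, gradFn n (h n) ∈ rangeD (D n) ∧ h n ∈ rangeD (D n))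
    (V : Matrix (Fin N) (Fin N) ℝ) (hVpd : V.PosDef)
    (ha2ii : ∀ x, (B x - hessΨ x).PosSemidef ∧ (V - B x).PosSemidef)
    (ha2iii : (∀ n, rn n = r ∧ Rn n = R) ∨
      (∃ c : ℝ, ∀ x, ‖mulE (B x) x - gradΨ x‖ ≤ c))
    :
    Summable (fun n => ‖gradFn n (h n)‖ ^ 2) := by
  classical
  obtain ⟨cΨ, hcΨ⟩ := hΨbdd
  have hcΨ' : ∀ x, cΨ ≤ Ψ x := fun x => hcΨ ⟨x, rfl⟩
  have hdot_le : ∀ (w x : EuclideanSpace ℝ (Fin N)), ofEuc w ⬝ᵥ ofEuc x ≤ ‖w‖ * ‖x‖ := by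
    intro w x; rw [dot_eq_inner]; exact real_inner_le_norm w x
  -- uniform curvature bound L for the surrogate
  obtain ⟨L, hL1, hqfAn⟩ :
      ∃ L : ℝ, 1 ≤ L ∧ ∀ n (v : EuclideanSpace ℝ (Fin N)), qf (An n (h n)) v ≤ L * ‖v‖^2 := by
    refine ⟨(∑ i, ∑ j, (|Rn 0 i j| + ∑' k, |Rn k i j - Rn (k+1) i j|)) + (∑ i, ∑ j, |V i j|) + 1,
      ?_, ?_⟩
    · have hK0 : (0:ℝ) ≤ ∑ i, ∑ j, (|Rn 0 i j| + ∑' k, |Rn k i j - Rn (k+1) i j|) :=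
        Finset.sum_nonneg fun i _ => Finset.sum_nonneg fun j _ =>
          add_nonneg (abs_nonneg _) (tsum_nonneg fun k => abs_nonneg _)
      have hCV0 : (0:ℝ) ≤ ∑ i, ∑ j, |V i j| :=
        Finset.sum_nonneg fun i _ => Finset.sum_nonneg fun j _ => abs_nonneg _
      linarith
    · intro n v
      have hKbd : ∑ i, ∑ j, |Rn n i j|
          ≤ ∑ i, ∑ j, (|Rn 0 i j| + ∑' k, |Rn k i j - Rn (k+1) i j|) :=
        Finset.sum_le_sum fun i _ => Finset.sum_le_sum fun j _ =>
          abs_le_of_summable_diff (fun m => Rn m i j) (ha1R i j) n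
      rw [hAn, qf_add]
      have h1 : qf (Rn n) v ≤ (∑ i, ∑ j, (|Rn 0 i j| + ∑' k, |Rn k i j - Rn (k+1) i j|)) * ‖v‖^2 := by
        refine le_trans (le_abs_self _) (le_trans (abs_qf_le _ v) ?_)
        exact mul_le_mul_of_nonneg_right hKbd (sq_nonneg _)
      have h2 : qf (B (h n)) v ≤ (∑ i, ∑ j, |V i j|) * ‖v‖^2 := by
        have hVq : qf V v = qf (B (h n)) v + qf (V - B (h n)) v := by
          rw [← qf_add]; congr 1; abel
        have h3 := psd_qf_nonneg (ha2ii (h n)).2 v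
        have h4 : qf V v ≤ (∑ i, ∑ j, |V i j|) * ‖v‖^2 := le_trans (le_abs_self _) (abs_qf_le V v)
        linarith
      nlinarith [sq_nonneg ‖v‖]
  have hLpos : (0:ℝ) < L := lt_of_lt_of_le one_pos hL1
  have hLne : L ≠ 0 := ne_of_gt hLpos
  -- descent inequality
  have hdescent : ∀ n, Fn n (h (n+1)) ≤ Fn n (h n) - (1/(2*L)) * ‖gradFn n (h n)‖^2 := by
    intro n
    obtain ⟨u1, hu1⟩ := (ha2i n).2
    obtain ⟨u2, hu2⟩ := (ha2i n).1
    have hy : h n - (1/L) • gradFn n (h n) ∈ rangeD (D n) := by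
      refine ⟨u1 - (1/L) • u2, ?_⟩
      have heq : ofEuc (h n - (1/L) • gradFn n (h n)) = (D n).mulVec (u1 - (1/L) • u2) := by
        rw [Matrix.mulVec_sub, Matrix.mulVec_smul]
        rw [ofEuc_sub', ofEuc_smul', hu2, hu1]
        rfl
      calc h n - (1/L) • gradFn n (h n) = toEuc (ofEuc (h n - (1/L) • gradFn n (h n))) := rfl
        _ = toEuc ((D n).mulVec (u1 - (1/L) • u2)) := by rw [heq]
    have hchain : Fn n (h (n+1)) ≤ Θ n (h n - (1/L) • gradFn n (h n)) (h n) :=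
      le_trans (hmaj n (h (n+1))) ((halg n).2 _ hy)
    rw [hΘ] at hchain
    have hdiff : (h n - (1/L) • gradFn n (h n)) - h n = (-(1/L)) • gradFn n (h n) := by
      rw [neg_smul]; abel
    rw [hdiff] at hchain
    have hd1 : ofEuc (gradFn n (h n)) ⬝ᵥ ofEuc ((-(1/L)) • gradFn n (h n))
        = (-(1/L)) * ‖gradFn n (h n)‖^2 := by
      rw [show ofEuc ((-(1/L)) • gradFn n (h n)) = (-(1/L)) • ofEuc (gradFn n (h n)) from rfl,
        dotProduct_smul, smul_eq_mul, norm_sq_eq_dot]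
    rw [hd1] at hchain
    have hd2 : qf (An n (h n)) ((-(1/L)) • gradFn n (h n))
        ≤ (1/L)^2 * (L * ‖gradFn n (h n)‖^2) := by
      rw [qf_smul]
      have := hqfAn n (gradFn n (h n))
      nlinarith [sq_nonneg (1/L)]
    have ht2 : (-(1/L)) * ‖gradFn n (h n)‖^2 + (1/2) * ((1/L)^2 * (L * ‖gradFn n (h n)‖^2))
        = -((1/(2*L)) * ‖gradFn n (h n)‖^2) := by
      field_simp
      ring
    linarith
  -- uniform bound on the rn
  obtain ⟨ρ, hρ0, hρbd⟩ : ∃ ρ : ℝ, 0 ≤ ρ ∧ ∀ n, ‖rn n‖ ≤ ρ := by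
    refine ⟨‖rn 0‖ + ∑' k, ‖rn k - rn (k+1)‖, ?_, fun n => norm_le_of_summable_diff rn ha1r n⟩
    exact add_nonneg (norm_nonneg _) (tsum_nonneg fun k => norm_nonneg _)
  -- eventual coercivity constant
  obtain ⟨μ, hμpos, n₀, hcoerc⟩ :
      ∃ μ : ℝ, 0 < μ ∧ ∃ n₀ : ℕ, ∀ n, n₀ ≤ n → ∀ x : EuclideanSpace ℝ (Fin N),
        μ * ‖x‖^2 ≤ qf (Rn n) x := by
    obtain ⟨μ2, hμ2pos, hμ2⟩ := posdef_qf_lower hN R hRpd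
    have hTend : Tendsto (fun n => ∑ i, ∑ j, |Rn n i j - R i j|) atTop (𝓝 0) := by
      have hij : ∀ i j : Fin N, Tendsto (fun n => |Rn n i j - R i j|) atTop (𝓝 0) := by
        intro i j
        have h1 := (ha1Rlim i j).sub_const (R i j)
        rw [sub_self] at h1
        simpa using h1.abs
      have hsum := tendsto_finset_sum (Finset.univ : Finset (Fin N))
        (fun i _ => tendsto_finset_sum (Finset.univ : Finset (Fin N)) (fun j _ => hij i j))
      simpa using hsum
    obtain ⟨n₀, hn₀⟩ := eventually_atTop.mp (hTend.eventually_lt_const (half_pos hμ2pos))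
    refine ⟨μ2/2, half_pos hμ2pos, n₀, fun n hn x => ?_⟩
    have hdec : qf (Rn n) x = qf R x + qf (Rn n - R) x := by
      rw [← qf_add]; congr 1; abel
    have h1 := hμ2 x
    have h2 : |qf (Rn n - R) x| ≤ (∑ i, ∑ j, |Rn n i j - R i j|) * ‖x‖^2 := by
      have := abs_qf_le (Rn n - R) x
      simpa [Matrix.sub_apply] using this
    have h3 : (∑ i, ∑ j, |Rn n i j - R i j|) * ‖x‖^2 ≤ μ2/2 * ‖x‖^2 :=
      mul_le_mul_of_nonneg_right (le_of_lt (hn₀ n hn)) (sq_nonneg _)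
    have h4 := neg_abs_le (qf (Rn n - R) x)
    linarith
  -- lower bound constant for Fn
  obtain ⟨m₀, hlow⟩ : ∃ m₀ : ℝ, ∀ n, n₀ ≤ n → ∀ x : EuclideanSpace ℝ (Fin N),
      μ/4 * ‖x‖^2 ≤ Fn n x - m₀ := by
    refine ⟨cΨ - ρ^2/μ, fun n hn x => ?_⟩
    rw [hFn]
    have h1 := hcoerc n hn x
    have h2 : ofEuc (rn n) ⬝ᵥ ofEuc x ≤ ρ * ‖x‖ :=
      le_trans (hdot_le _ _) (mul_le_mul_of_nonneg_right (hρbd n) (norm_nonneg _))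
    have h3 := hcΨ' x
    have key : 0 ≤ μ/4 * ‖x‖^2 - ρ * ‖x‖ + ρ^2/μ := by
      have heq : μ/4 * ‖x‖^2 - ρ * ‖x‖ + ρ^2/μ = (μ * ‖x‖ - 2*ρ)^2 / (4*μ) := by
        field_simp
        ring
      rw [heq]
      positivity
    linarith
  have hu0 : ∀ n, n₀ ≤ n → 0 ≤ Fn n (h n) - m₀ := by
    intro n hn
    have := hlow n hn (h n)
    nlinarith [sq_nonneg ‖h n‖, hμpos]
  -- quantities a, c'
  obtain ⟨a, c', hapos, hc'pos, hac', hnorm_le⟩ :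
      ∃ a c' : ℝ, 0 < a ∧ 0 < c' ∧ a * c' = 1 ∧
        ∀ n, n₀ ≤ n → ‖h n‖^2 ≤ a * (Fn n (h n) - m₀) := by
    refine ⟨4/μ, μ/4, by positivity, by positivity, by field_simp, fun n hn => ?_⟩
    have h4 := hlow n hn (h n)
    calc ‖h n‖^2 = (4/μ) * (μ/4 * ‖h n‖^2) := by
          field_simp
      _ ≤ (4/μ) * (Fn n (h n) - m₀) := mul_le_mul_of_nonneg_left h4 (by positivity)
  -- perturbation sequence δ
  obtain ⟨δ, hδ0, hδsum, hδF⟩ :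
      ∃ δ : ℕ → ℝ, (∀ n, 0 ≤ δ n) ∧ Summable δ ∧
        ∀ n (x : EuclideanSpace ℝ (Fin N)), Fn (n+1) x ≤ Fn n x + δ n * (1 + ‖x‖^2) := by
    refine ⟨fun n => (1/2) * (∑ i, ∑ j, |Rn (n+1) i j - Rn n i j|) + ‖rn (n+1) - rn n‖,
      ?_, ?_, ?_⟩
    · intro n
      have : (0:ℝ) ≤ ∑ i, ∑ j, |Rn (n+1) i j - Rn n i j| :=
        Finset.sum_nonneg fun i _ => Finset.sum_nonneg fun j _ => abs_nonneg _
      positivity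
    · apply Summable.add
      · apply Summable.mul_left
        apply summable_sum
        intro i _
        apply summable_sum
        intro j _
        exact (summable_congr fun n => by rw [abs_sub_comm]).mpr (ha1R i j)
      · exact (summable_congr fun n => by rw [norm_sub_rev]).mpr ha1r
    · intro n x
      rw [hFn, hFn]
      have hq : qf (Rn (n+1)) x = qf (Rn n) x + qf (Rn (n+1) - Rn n) x := by
        rw [← qf_add]; congr 1; abel
      have h2 : |qf (Rn (n+1) - Rn n) x| ≤ (∑ i, ∑ j, |Rn (n+1) i j - Rn n i j|) * ‖x‖^2 := by
        have := abs_qf_le (Rn (n+1) - Rn n) x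
        simpa [Matrix.sub_apply] using this
      have h3 : ofEuc (rn n) ⬝ᵥ ofEuc x - ofEuc (rn (n+1)) ⬝ᵥ ofEuc x
          ≤ ‖rn (n+1) - rn n‖ * ‖x‖ := by
        have hd : ofEuc (rn n) ⬝ᵥ ofEuc x - ofEuc (rn (n+1)) ⬝ᵥ ofEuc x
            = ofEuc (rn n - rn (n+1)) ⬝ᵥ ofEuc x := by
          rw [ofEuc_sub', sub_dotProduct]
        rw [hd, show ‖rn (n+1) - rn n‖ = ‖rn n - rn (n+1)‖ from norm_sub_rev _ _]
        exact hdot_le _ _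
      have h4 : ‖x‖ ≤ 1 + ‖x‖^2 := by nlinarith [sq_nonneg (‖x‖ - 1)]
      have h5 : ‖rn (n+1) - rn n‖ * ‖x‖ ≤ ‖rn (n+1) - rn n‖ * (1 + ‖x‖^2) :=
        mul_le_mul_of_nonneg_left h4 (norm_nonneg _)
      have h6 : (0:ℝ) ≤ ∑ i, ∑ j, |Rn (n+1) i j - Rn n i j| :=
        Finset.sum_nonneg fun i _ => Finset.sum_nonneg fun j _ => abs_nonneg _
      have h7 : qf (Rn (n+1) - Rn n) x ≤ (∑ i, ∑ j, |Rn (n+1) i j - Rn n i j|) * ‖x‖^2 :=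
        le_trans (le_abs_self _) h2
      nlinarith [sq_nonneg ‖x‖]
  -- choose n₁
  obtain ⟨n₁, hn₁0, haδ⟩ : ∃ n₁ : ℕ, n₀ ≤ n₁ ∧ ∀ n, n₁ ≤ n → a * δ n ≤ 1/2 := by
    obtain ⟨n₁', hn₁'⟩ := eventually_atTop.mp
      (hδsum.tendsto_atTop_zero.eventually_lt_const (show (0:ℝ) < 1/(2*a) by positivity))
    refine ⟨max n₀ n₁', le_max_left _ _, fun n hn => ?_⟩
    have h1 := hn₁' n (le_trans (le_max_right _ _) hn)
    have h2 : a * (1/(2*a)) = 1/2 := by field_simp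
    nlinarith [hapos]
  -- main recurrence
  have hrec : ∀ n, n₀ ≤ n →
      (1 - a * δ n) * (Fn (n+1) (h (n+1)) - m₀)
        ≤ (Fn n (h n) - m₀) + δ n - (1/(2*L)) * ‖gradFn n (h n)‖^2 := by
    intro n hn
    have h1 := hdescent n
    have h2 := hδF n (h (n+1))
    have h3 := hnorm_le (n+1) (le_trans hn (Nat.le_succ n))
    have h4 := hδ0 n
    nlinarith [mul_le_mul_of_nonneg_left h3 h4]
  -- sum bound constant S
  obtain ⟨S, hSbd⟩ : ∃ S : ℝ, ∀ k, ∑ j ∈ Finset.range k, δ (n₁+j) ≤ S := by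
    refine ⟨∑' k, δ k, fun k => ?_⟩
    have h1 := hδsum.sum_le_tsum (Finset.Ico n₁ (n₁+k)) (fun i _ => hδ0 i)
    rw [Finset.sum_Ico_eq_sum_range] at h1
    simpa using h1
  -- Gronwall-type uniform bound
  obtain ⟨U, hU0, hUbd⟩ : ∃ U : ℝ, 0 ≤ U ∧ ∀ n, n₁ ≤ n → Fn n (h n) - m₀ ≤ U := by
    have hstep : ∀ n, n₁ ≤ n →
        (Fn (n+1) (h (n+1)) - m₀) + c' ≤ (1 + 2*a*δ n) * ((Fn n (h n) - m₀) + c') := by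
      intro n hn
      have hn0 : n₀ ≤ n := le_trans hn₁0 hn
      have h1 := hrec n hn0
      have h2 := haδ n hn
      have h3 := hδ0 n
      have hu := hu0 n hn0
      have hu' := hu0 (n+1) (le_trans hn0 (Nat.le_succ n))
      have hs : 0 ≤ (1/(2*L)) * ‖gradFn n (h n)‖^2 := by positivity
      have e1 : (1 - a*δ n) * (Fn (n+1) (h (n+1)) - m₀) ≤ (Fn n (h n) - m₀) + δ n := by
        linarith
      have e3 : (Fn (n+1) (h (n+1)) - m₀) ≤ (1 + 2*a*δ n) * (Fn n (h n) - m₀) + 2*δ n := by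
        nlinarith [mul_nonneg (mul_nonneg hapos.le h3) hu', mul_nonneg hapos.le h3,
          mul_le_mul_of_nonneg_right h2 h3]
      have e4 : (1 + 2*a*δ n) * ((Fn n (h n) - m₀) + c')
          = (1 + 2*a*δ n) * (Fn n (h n) - m₀) + c' + 2*δ n := by
        have h9 : 2*(a*c')*δ n = 2*δ n := by rw [hac']; ring
        nlinarith [h9]
      linarith
    have hgron : ∀ k, (Fn (n₁+k) (h (n₁+k)) - m₀) + c' ≤
        ((Fn n₁ (h n₁) - m₀) + c') * Real.exp (2*a*(∑ j ∈ Finset.range k, δ (n₁+j))) := by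
      intro k
      induction k with
      | zero => simp
      | succ k ih =>
        have hstep' := hstep (n₁+k) (Nat.le_add_right _ _)
        have hpos1 : 0 ≤ (Fn (n₁+k) (h (n₁+k)) - m₀) + c' := by
          have := hu0 (n₁+k) (le_trans hn₁0 (Nat.le_add_right _ _))
          linarith
        have h1x : (1 + 2*a*δ (n₁+k)) ≤ Real.exp (2*a*δ (n₁+k)) := by
          have := Real.add_one_le_exp (2*a*δ (n₁+k))
          linarith
        calc (Fn (n₁+(k+1)) (h (n₁+(k+1))) - m₀) + c'
            ≤ (1 + 2*a*δ (n₁+k)) * ((Fn (n₁+k) (h (n₁+k)) - m₀) + c') := hstep'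
          _ ≤ Real.exp (2*a*δ (n₁+k)) * ((Fn (n₁+k) (h (n₁+k)) - m₀) + c') :=
              mul_le_mul_of_nonneg_right h1x hpos1
          _ ≤ Real.exp (2*a*δ (n₁+k)) *
              (((Fn n₁ (h n₁) - m₀) + c') * Real.exp (2*a*(∑ j ∈ Finset.range k, δ (n₁+j)))) :=
              mul_le_mul_of_nonneg_left ih (Real.exp_nonneg _)
          _ = ((Fn n₁ (h n₁) - m₀) + c') * Real.exp (2*a*(∑ j ∈ Finset.range (k+1), δ (n₁+j))) := by
              rw [Finset.sum_range_succ, mul_add, Real.exp_add]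
              ring
    have hbase : 0 ≤ (Fn n₁ (h n₁) - m₀) + c' := by
      have := hu0 n₁ hn₁0
      linarith
    refine ⟨((Fn n₁ (h n₁) - m₀) + c') * Real.exp (2*a*S), mul_nonneg hbase (Real.exp_nonneg _),
      fun n hn => ?_⟩
    obtain ⟨k, rfl⟩ := Nat.exists_eq_add_of_le hn
    have h1 := hgron k
    have h2 : Real.exp (2*a*(∑ j ∈ Finset.range k, δ (n₁+j))) ≤ Real.exp (2*a*S) :=
      Real.exp_le_exp.mpr (by nlinarith [hSbd k, hapos])
    have h3 := mul_le_mul_of_nonneg_left h2 hbase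
    linarith
  have hC0 : (0:ℝ) ≤ 1 + a*U := by nlinarith [mul_nonneg hapos.le hU0]
  -- per-step bound on the gradient term
  have hsle : ∀ k, (1/(2*L)) * ‖gradFn (n₁+k) (h (n₁+k))‖^2 ≤
      (Fn (n₁+k) (h (n₁+k)) - m₀) - (Fn (n₁+(k+1)) (h (n₁+(k+1))) - m₀)
        + δ (n₁+k) * (1 + a*U) := by
    intro k
    have h1 := hrec (n₁+k) (le_trans hn₁0 (Nat.le_add_right _ _))
    have h2 := hUbd (n₁+(k+1)) (Nat.le_add_right _ _)
    have h3 := hδ0 (n₁+k)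
    have h4 := mul_le_mul_of_nonneg_left h2 (mul_nonneg hapos.le h3)
    simp only [show n₁+(k+1) = n₁+k+1 from rfl] at *
    nlinarith [h1, h4]
  have hpartial : ∀ K', ∑ k ∈ Finset.range K', (1/(2*L)) * ‖gradFn (n₁+k) (h (n₁+k))‖^2 ≤
      (Fn n₁ (h n₁) - m₀) + (1 + a*U) * S := by
    intro K'
    have htel : ∑ k ∈ Finset.range K',
        ((Fn (n₁+k) (h (n₁+k)) - m₀) - (Fn (n₁+(k+1)) (h (n₁+(k+1))) - m₀))
        = (Fn (n₁+0) (h (n₁+0)) - m₀) - (Fn (n₁+K') (h (n₁+K')) - m₀) :=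
      Finset.sum_range_sub' (fun k => Fn (n₁+k) (h (n₁+k)) - m₀) K'
    have hsum1 : ∑ k ∈ Finset.range K', (1/(2*L)) * ‖gradFn (n₁+k) (h (n₁+k))‖^2
        ≤ ∑ k ∈ Finset.range K',
          ((Fn (n₁+k) (h (n₁+k)) - m₀) - (Fn (n₁+(k+1)) (h (n₁+(k+1))) - m₀)
            + δ (n₁+k) * (1 + a*U)) :=
      Finset.sum_le_sum fun k _ => hsle k
    rw [Finset.sum_add_distrib, htel] at hsum1
    have hδpart : ∑ k ∈ Finset.range K', δ (n₁+k) * (1+a*U) ≤ (1+a*U) * S := by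
      rw [← Finset.sum_mul]
      calc (∑ k ∈ Finset.range K', δ (n₁+k)) * (1+a*U) ≤ S * (1+a*U) :=
            mul_le_mul_of_nonneg_right (hSbd K') hC0
        _ = (1+a*U) * S := mul_comm _ _
    have huK := hu0 (n₁+K') (le_trans hn₁0 (Nat.le_add_right _ _))
    simp only [Nat.add_zero] at hsum1
    linarith
  have hs0 : ∀ k, 0 ≤ (1/(2*L)) * ‖gradFn (n₁+k) (h (n₁+k))‖^2 := fun k => by positivity
  have hsummable1 : Summable (fun k => (1/(2*L)) * ‖gradFn (n₁+k) (h (n₁+k))‖^2) :=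
    summable_of_sum_range_le hs0 hpartial
  have hsummable2 : Summable (fun k => ‖gradFn (k+n₁) (h (k+n₁))‖^2) := by
    have h1 := hsummable1.mul_left (2*L)
    refine (summable_congr fun k => ?_).mp h1
    rw [Nat.add_comm k n₁]
    field_simp
  exact (summable_nat_add_iff n₁).mp hsummable2
end

section
/- Let H, A ∈ ℝ^{N×N} be symmetric positive definite matrices with H ⪯ A, let D ∈ ℝ^{N×M}, and let g ∈ ℝ^N be a nonzero vector belonging to the range of D. Set C = D (Dᵀ A D)† Dᵀ, let σ̲ and σ̄ be the smallest and largest eigenvalues of H, and let κ̄ be the largest eigenvalue of A^{1/2} H⁻¹ A^{1/2}. Then (gᵀ C g)/(gᵀ H⁻¹ g) ≥ 4 σ̲ σ̄ / (κ̄ (σ̲ + σ̄)²). -/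
open Matrix Filter Topology

noncomputable section

/-- The positive semidefinite square root of a positive semidefinite matrix
(the definition `Matrix.PosSemidef.sqrt` of the older Mathlib, since removed). -/
def Matrix.PosSemidef.sqrt {n : ℕ} {A : Matrix (Fin n) (Fin n) ℝ} (hA : A.PosSemidef) :
    Matrix (Fin n) (Fin n) ℝ :=
  hA.1.eigenvectorUnitary.1 * diagonal ((↑) ∘ (fun x : ℝ => √x) ∘ hA.1.eigenvalues) *
    (star hA.1.eigenvectorUnitary : Matrix (Fin n) (Fin n) ℝ)

end

section Helpers
variable {m n : ℕ}

private lemma vecMul_eq_transpose_mulVec (M : Matrix (Fin m) (Fin n) ℝ) (x : Fin m → ℝ) :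
    x ᵥ* M = Mᵀ *ᵥ x := by
  rw [← Matrix.transpose_transpose M, Matrix.vecMul_transpose, Matrix.transpose_transpose]

private lemma dot_shift (M : Matrix (Fin m) (Fin n) ℝ) (x : Fin m → ℝ) (y : Fin n → ℝ) :
    x ⬝ᵥ (M *ᵥ y) = (Mᵀ *ᵥ x) ⬝ᵥ y := by
  rw [Matrix.dotProduct_mulVec, vecMul_eq_transpose_mulVec]

private lemma sym_dot {P : Matrix (Fin n) (Fin n) ℝ} (hP : Pᵀ = P) (x y : Fin n → ℝ) :
    x ⬝ᵥ (P *ᵥ y) = y ⬝ᵥ (P *ᵥ x) := by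
  rw [dot_shift, hP, dotProduct_comm]

private lemma star_real_matrix (U : Matrix (Fin m) (Fin m) ℝ) : star U = Uᵀ := by
  rw [Matrix.star_eq_conjTranspose, Matrix.conjTranspose_eq_transpose_of_trivial]

private lemma herm_transpose {P : Matrix (Fin n) (Fin n) ℝ} (hP : P.IsHermitian) : Pᵀ = P := by
  rw [← Matrix.conjTranspose_eq_transpose_of_trivial]; exact hP

private lemma transpose_herm {P : Matrix (Fin n) (Fin n) ℝ} (hP : Pᵀ = P) : P.IsHermitian := by
  show Pᴴ = P
  rw [Matrix.conjTranspose_eq_transpose_of_trivial]; exact hP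

private lemma posdef_dot {P : Matrix (Fin n) (Fin n) ℝ} (hP : P.PosDef) {x : Fin n → ℝ}
    (hx : x ≠ 0) : 0 < x ⬝ᵥ P *ᵥ x := by
  have := hP.dotProduct_mulVec_pos hx
  simpa using this

private lemma possemidef_dot {P : Matrix (Fin n) (Fin n) ℝ} (hP : P.PosSemidef) (x : Fin n → ℝ) :
    0 ≤ x ⬝ᵥ P *ᵥ x := by
  have := hP.dotProduct_mulVec_nonneg x
  simpa using this

private lemma quad_diag_coords {P U : Matrix (Fin n) (Fin n) ℝ}
    (d : Fin n → ℝ) (hP : P = U * Matrix.diagonal d * star U) (x : Fin n → ℝ) :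
    x ⬝ᵥ P *ᵥ x = ∑ i, d i * ((star U *ᵥ x) i)^2 := by
  subst hP
  rw [mul_assoc, ← Matrix.mulVec_mulVec, Matrix.dotProduct_mulVec x U,
    vecMul_eq_transpose_mulVec, ← star_real_matrix, ← Matrix.mulVec_mulVec]
  simp only [dotProduct, Matrix.mulVec_diagonal]
  exact Finset.sum_congr rfl fun i _ => by ring

private lemma dot_norm_eq {U : Matrix (Fin n) (Fin n) ℝ} (hU : U * star U = 1) (x : Fin n → ℝ) :
    (star U *ᵥ x) ⬝ᵥ (star U *ᵥ x) = x ⬝ᵥ x := by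
  rw [star_real_matrix] at hU ⊢
  rw [dot_shift, Matrix.transpose_transpose, Matrix.mulVec_mulVec, hU, Matrix.one_mulVec]

private lemma conjmul_aux {U X Y : Matrix (Fin n) (Fin n) ℝ} (hU : star U * U = 1) :
    (U * X * star U) * (U * Y * star U) = U * (X * Y) * star U := by
  simp only [mul_assoc]
  rw [← mul_assoc (star U) U (Y * star U), hU, one_mul]

/-- Spectral decomposition, real coefficients. -/
private lemma spectral_real {P : Matrix (Fin n) (Fin n) ℝ} (hP : P.IsHermitian) :
    P = (hP.eigenvectorUnitary : Matrix (Fin n) (Fin n) ℝ) * Matrix.diagonal hP.eigenvalues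
      * star (hP.eigenvectorUnitary : Matrix (Fin n) (Fin n) ℝ) := by
  have := hP.spectral_theorem
  simpa using this

/-- Upper bound for quadratic forms of a symmetric matrix by an eigenvalue bound. -/
private lemma herm_quad_le {P : Matrix (Fin n) (Fin n) ℝ} (hP : P.IsHermitian) {c : ℝ}
    (hc : ∀ i, hP.eigenvalues i ≤ c) (x : Fin n → ℝ) :
    x ⬝ᵥ P *ᵥ x ≤ c * (x ⬝ᵥ x) := by
  set U : Matrix (Fin n) (Fin n) ℝ := (hP.eigenvectorUnitary : Matrix (Fin n) (Fin n) ℝ)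
  have hU2 : U * star U = 1 := Matrix.mem_unitaryGroup_iff.mp hP.eigenvectorUnitary.2
  rw [quad_diag_coords hP.eigenvalues (spectral_real hP) x, ← dot_norm_eq hU2 x]
  have : (star U *ᵥ x) ⬝ᵥ (star U *ᵥ x) = ∑ i, ((star U *ᵥ x) i)^2 := by
    simp only [dotProduct]
    exact Finset.sum_congr rfl fun i _ => by ring
  rw [this, Finset.mul_sum]
  exact Finset.sum_le_sum fun i _ => mul_le_mul_of_nonneg_right (hc i) (sq_nonneg _)

/-- Existence of the Moore-Penrose pseudoinverse of a symmetric real matrix. -/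
private lemma exists_pinv_herm {S : Matrix (Fin n) (Fin n) ℝ} (hS : S.IsHermitian) :
    ∃ B : Matrix (Fin n) (Fin n) ℝ,
      S * B * S = S ∧ B * S * B = B ∧ (S * B)ᵀ = S * B ∧ (B * S)ᵀ = B * S := by
  set U : Matrix (Fin n) (Fin n) ℝ := (hS.eigenvectorUnitary : Matrix (Fin n) (Fin n) ℝ)
  have hU1 : star U * U = 1 := Matrix.mem_unitaryGroup_iff'.mp hS.eigenvectorUnitary.2
  have hU2 : U * star U = 1 := Matrix.mem_unitaryGroup_iff.mp hS.eigenvectorUnitary.2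
  set d : Fin n → ℝ := hS.eigenvalues
  have hSpec : S = U * Matrix.diagonal d * star U := spectral_real hS
  refine ⟨U * Matrix.diagonal (fun i => (d i)⁻¹) * star U, ?_, ?_, ?_, ?_⟩
  · rw [hSpec, conjmul_aux hU1, conjmul_aux hU1, Matrix.diagonal_mul_diagonal,
      Matrix.diagonal_mul_diagonal]
    congr 2
    funext i j
    simp only [Matrix.diagonal_apply]
    split_ifs with hij
    · rcases eq_or_ne (d i) 0 with h | h
      · simp [h]
      · rw [mul_inv_cancel₀ h, one_mul]
    · rfl
  · rw [hSpec, conjmul_aux hU1, conjmul_aux hU1, Matrix.diagonal_mul_diagonal,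
      Matrix.diagonal_mul_diagonal]
    congr 2
    funext i j
    simp only [Matrix.diagonal_apply]
    split_ifs with hij
    · rcases eq_or_ne (d i) 0 with h | h
      · simp [h]
      · rw [inv_mul_cancel₀ h, one_mul]
    · rfl
  · rw [hSpec, conjmul_aux hU1, Matrix.diagonal_mul_diagonal, star_real_matrix,
      Matrix.transpose_mul, Matrix.transpose_mul, Matrix.transpose_transpose,
      Matrix.diagonal_transpose, mul_assoc]
  · rw [hSpec, conjmul_aux hU1, Matrix.diagonal_mul_diagonal, star_real_matrix,
      Matrix.transpose_mul, Matrix.transpose_mul, Matrix.transpose_transpose,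
      Matrix.diagonal_transpose, mul_assoc]

private lemma pinv_spec {S : Matrix (Fin n) (Fin n) ℝ} (hS : S.IsHermitian) :
    S * pinv S * S = S ∧ pinv S * S * pinv S = pinv S ∧
      (S * pinv S)ᵀ = S * pinv S ∧ (pinv S * S)ᵀ = pinv S * S := by
  have h := exists_pinv_herm hS
  unfold pinv
  rw [dif_pos h]
  exact h.choose_spec

/-- Scalar Kantorovich inequality for weighted sums. -/
private lemma kantorovich_sum (lam y : Fin n → ℝ) (a b : ℝ) (ha : 0 < a) (hb : 0 < b)
    (h1 : ∀ i, a ≤ lam i) (h2 : ∀ i, lam i ≤ b) :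
    (∑ i, lam i * y i ^ 2) * (∑ i, (lam i)⁻¹ * y i ^ 2) ≤
      (a + b) ^ 2 / (4 * a * b) * (∑ i, y i ^ 2) ^ 2 := by
  set s := ∑ i, lam i * y i ^ 2 with hs
  set T := ∑ i, y i ^ 2 with hT
  set W := ∑ i, (lam i)⁻¹ * y i ^ 2 with hWdef
  have hab : 0 < a * b := mul_pos ha hb
  have hs0 : 0 ≤ s := Finset.sum_nonneg fun i _ =>
    mul_nonneg (le_trans ha.le (h1 i)) (sq_nonneg _)
  have hW : a * b * W ≤ (a + b) * T - s := by
    have : (a + b) * T - s = ∑ i, ((a + b) - lam i) * y i ^ 2 := by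
      rw [hT, hs, Finset.mul_sum, ← Finset.sum_sub_distrib]
      exact Finset.sum_congr rfl fun i _ => by ring
    rw [this, hWdef, Finset.mul_sum]
    refine Finset.sum_le_sum fun i _ => ?_
    have hli : 0 < lam i := lt_of_lt_of_le ha (h1 i)
    have key : a * b * (lam i)⁻¹ ≤ (a + b) - lam i := by
      rw [mul_inv_le_iff₀ hli]
      nlinarith [mul_nonneg (sub_nonneg.mpr (h1 i)) (sub_nonneg.mpr (h2 i))]
    calc a * b * ((lam i)⁻¹ * y i ^ 2) = (a * b * (lam i)⁻¹) * y i ^ 2 := by ring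
      _ ≤ ((a + b) - lam i) * y i ^ 2 := mul_le_mul_of_nonneg_right key (sq_nonneg _)
  have h4 : s * ((a + b) * T - s) ≤ (a + b) ^ 2 * T ^ 2 / 4 := by
    nlinarith [sq_nonneg (2 * s - (a + b) * T)]
  have h5 : s * (a * b * W) ≤ (a + b) ^ 2 * T ^ 2 / 4 :=
    le_trans (mul_le_mul_of_nonneg_left hW hs0) h4
  rw [div_mul_eq_mul_div, le_div_iff₀ (by positivity : (0:ℝ) < 4 * a * b)]
  nlinarith [h5]

private lemma sqrt_mul_self' {A : Matrix (Fin n) (Fin n) ℝ} (hA : A.PosSemidef) :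
    hA.sqrt * hA.sqrt = A := by
  have hU1 : star (hA.1.eigenvectorUnitary : Matrix (Fin n) (Fin n) ℝ) *
      (hA.1.eigenvectorUnitary : Matrix (Fin n) (Fin n) ℝ) = 1 :=
    Matrix.mem_unitaryGroup_iff'.mp hA.1.eigenvectorUnitary.2
  unfold Matrix.PosSemidef.sqrt
  rw [conjmul_aux hU1, Matrix.diagonal_mul_diagonal]
  conv_rhs => rw [spectral_real hA.1]
  congr 2
  congr 1
  funext i
  simp [Real.mul_self_sqrt (hA.eigenvalues_nonneg i)]

private lemma posSemidef_sqrt' {A : Matrix (Fin n) (Fin n) ℝ} (hA : A.PosSemidef) :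
    hA.sqrt.PosSemidef := by
  unfold Matrix.PosSemidef.sqrt
  refine Matrix.PosSemidef.of_dotProduct_mulVec_nonneg (transpose_herm ?_) fun x => ?_
  · rw [star_real_matrix, Matrix.transpose_mul, Matrix.transpose_mul, Matrix.transpose_transpose,
      Matrix.diagonal_transpose, mul_assoc]
  · have hstar : star x = x := by funext i; simp
    rw [hstar, quad_diag_coords _ rfl x]
    exact Finset.sum_nonneg fun i _ => mul_nonneg (by simp [Real.sqrt_nonneg]) (sq_nonneg _)

end Helpers

set_option maxHeartbeats 2000000 in
theorem kantorovich_lower_bound_subspace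
    {N M : ℕ} (H A : Matrix (Fin N) (Fin N) ℝ)
    (hH : H.PosDef) (hA : A.PosDef) (hHA : (A - H).PosSemidef)
    (D : Matrix (Fin N) (Fin M) ℝ) (g : Fin N → ℝ) (hg : g ≠ 0)
    (hgD : ∃ u : Fin M → ℝ, g = D.mulVec u)
    (C : Matrix (Fin N) (Fin N) ℝ) (hC : C = D * pinv (Dᵀ * A * D) * Dᵀ)
    (σlo σhi : ℝ) (hσlo : σlo = ⨅ i, hH.1.eigenvalues i)
    (hσhi : σhi = ⨆ i, hH.1.eigenvalues i)
    (K : Matrix (Fin N) (Fin N) ℝ)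
    (hK : K = hA.posSemidef.sqrt * H⁻¹ * hA.posSemidef.sqrt)
    (hKherm : K.IsHermitian)
    (κhi : ℝ) (hκhi : κhi = ⨆ i, hKherm.eigenvalues i) :
    4 * σlo * σhi / (κhi * (σlo + σhi) ^ 2) ≤
      (g ⬝ᵥ C.mulVec g) / (g ⬝ᵥ H⁻¹.mulVec g) := by
  classical
  have hNe : Nonempty (Fin N) := by
    by_contra h
    have he : IsEmpty (Fin N) := not_nonempty_iff.mp h
    exact hg (funext fun i => (he.false i).elim)
  obtain ⟨R, hRdef⟩ : ∃ R, R = hA.posSemidef.sqrt := ⟨_, rfl⟩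
  rw [← hRdef] at hK
  have hR2 : R * R = A := by rw [hRdef]; exact sqrt_mul_self' hA.posSemidef
  have hRpsd : R.PosSemidef := by rw [hRdef]; exact posSemidef_sqrt' hA.posSemidef
  have hRt : Rᵀ = R := herm_transpose hRpsd.1
  have hAt : Aᵀ = A := herm_transpose hA.1
  have hHt : Hᵀ = H := herm_transpose hH.1
  have hKt : Kᵀ = K := herm_transpose hKherm
  have hHdetu : IsUnit H.det := isUnit_iff_ne_zero.mpr hH.det_pos.ne'
  have hRdetu : IsUnit R.det := by
    refine isUnit_iff_ne_zero.mpr fun h0 => ?_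
    have : A.det = R.det * R.det := by rw [← hR2, Matrix.det_mul]
    rw [h0, mul_zero] at this
    exact hA.det_pos.ne' this
  have hHinvPD : H⁻¹.PosDef := hH.inv
  have hHinvt : H⁻¹ᵀ = H⁻¹ := herm_transpose hHinvPD.1
  -- quantities
  obtain ⟨nn, hnn⟩ : ∃ x : ℝ, x = g ⬝ᵥ g := ⟨_, rfl⟩
  obtain ⟨gA, hgAdef⟩ : ∃ x : ℝ, x = g ⬝ᵥ A *ᵥ g := ⟨_, rfl⟩
  obtain ⟨gH, hgHdef⟩ : ∃ x : ℝ, x = g ⬝ᵥ H *ᵥ g := ⟨_, rfl⟩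
  obtain ⟨gHinv, hgHinvdef⟩ : ∃ x : ℝ, x = g ⬝ᵥ H⁻¹ *ᵥ g := ⟨_, rfl⟩
  have hnn0 : 0 < nn := by
    have h1 : 0 ≤ nn := by
      rw [hnn]
      exact Finset.sum_nonneg fun i _ => mul_self_nonneg _
    have h2 : nn ≠ 0 := by
      rw [hnn]
      exact fun h => hg (dotProduct_self_eq_zero.mp h)
    exact lt_of_le_of_ne h1 (Ne.symm h2)
  have hgA0 : 0 < gA := hgAdef ▸ posdef_dot hA hg
  have hgH0 : 0 < gH := hgHdef ▸ posdef_dot hH hg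
  have hgHinv0 : 0 < gHinv := hgHinvdef ▸ posdef_dot hHinvPD hg
  -- eigenvalue bounds for H
  obtain ⟨d, hd⟩ : ∃ d, d = hH.1.eigenvalues := ⟨_, rfl⟩
  have hdpos : ∀ i, 0 < d i := fun i => hd ▸ hH.eigenvalues_pos i
  have hσlo_le : ∀ i, σlo ≤ d i := fun i =>
    hσlo ▸ hd ▸ ciInf_le (Set.Finite.bddBelow (Set.finite_range _)) i
  have hle_σhi : ∀ i, d i ≤ σhi := fun i =>
    hσhi ▸ hd ▸ le_ciSup (Set.Finite.bddAbove (Set.finite_range _)) i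
  have hσlo0 : 0 < σlo := by
    obtain ⟨i, hi⟩ := exists_eq_ciInf_of_finite (f := d)
    have : σlo = d i := by rw [hσlo, ← hd]; exact hi.symm
    rw [this]
    exact hdpos i
  have hσhi0 : 0 < σhi :=
    lt_of_lt_of_le hσlo0 (le_trans (hσlo_le (Classical.arbitrary _))
      (hle_σhi (Classical.arbitrary _)))
  -- K is positive definite, κhi > 0, eigenvalue bound
  have hKPD : K.PosDef := by
    refine Matrix.PosDef.of_dotProduct_mulVec_pos hKherm fun x hx => ?_
    have hRx : R *ᵥ x ≠ 0 := by
      intro h0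
      apply hx
      have hxx : R⁻¹ *ᵥ (R *ᵥ x) = x := by
        rw [Matrix.mulVec_mulVec, Matrix.nonsing_inv_mul R hRdetu, Matrix.one_mulVec]
      rw [← hxx, h0, Matrix.mulVec_zero]
    have hq : x ⬝ᵥ K *ᵥ x = (R *ᵥ x) ⬝ᵥ H⁻¹ *ᵥ (R *ᵥ x) := by
      refine Eq.symm ?_
      conv_lhs => rw [Matrix.mulVec_mulVec, dot_shift, Matrix.transpose_mul, hHinvt, hRt,
        Matrix.mulVec_mulVec, dotProduct_comm]
      rw [hK]
    have hstar : star x = x := by funext i; simp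
    have hpos : (0:ℝ) < x ⬝ᵥ K *ᵥ x := by
      rw [hq]
      exact posdef_dot hHinvPD hRx
    simpa [hstar] using hpos
  have hκ_le : ∀ i, hKherm.eigenvalues i ≤ κhi := fun i =>
    hκhi ▸ le_ciSup (Set.Finite.bddAbove (Set.finite_range _)) i
  have hκ0 : 0 < κhi := by
    obtain ⟨i, hi⟩ := exists_eq_ciSup_of_finite (f := hKherm.eigenvalues)
    rw [hκhi, ← hi]
    exact hKPD.eigenvalues_pos i
  -- Step 1 : nn^2 ≤ c * gA
  obtain ⟨S, hSdef⟩ : ∃ S, S = Dᵀ * A * D := ⟨_, rfl⟩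
  rw [← hSdef] at hC
  have hSt : Sᵀ = S := by
    rw [hSdef, Matrix.transpose_mul, Matrix.transpose_mul, Matrix.transpose_transpose,
      hAt, Matrix.mul_assoc]
  have hSh : S.IsHermitian := transpose_herm hSt
  obtain ⟨hp1, hp2, hp3, hp4⟩ := pinv_spec hSh
  obtain ⟨u₀, hu₀⟩ := hgD
  have hrange : ∃ z, S *ᵥ z = Dᵀ *ᵥ g := by
    have hM0S : (R * D)ᵀ * (R * D) = S := by
      rw [Matrix.transpose_mul, hRt, hSdef, Matrix.mul_assoc, ← Matrix.mul_assoc R R D,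
        hR2, Matrix.mul_assoc]
    have hle : LinearMap.range S.mulVecLin ≤ LinearMap.range (R * D)ᵀ.mulVecLin := by
      rw [← hM0S, Matrix.mulVecLin_mul]
      exact LinearMap.range_comp_le_range _ _
    have heq : LinearMap.range S.mulVecLin = LinearMap.range (R * D)ᵀ.mulVecLin := by
      apply Submodule.eq_of_le_of_finrank_le hle
      have h1 : (R * D)ᵀ.rank = S.rank := by
        rw [Matrix.rank_transpose, ← hM0S, Matrix.rank_transpose_mul_self]
      exact le_of_eq h1
    have hmem : Dᵀ *ᵥ g ∈ LinearMap.range (R * D)ᵀ.mulVecLin := by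
      refine ⟨R⁻¹ *ᵥ g, ?_⟩
      rw [Matrix.mulVecLin_apply, Matrix.transpose_mul, hRt, Matrix.mulVec_mulVec,
        Matrix.mul_assoc, Matrix.mul_nonsing_inv R hRdetu, Matrix.mul_one]
    rw [← heq] at hmem
    obtain ⟨z, hz⟩ := hmem
    exact ⟨z, by rw [← Matrix.mulVecLin_apply]; exact hz⟩
  obtain ⟨B, hBdef⟩ : ∃ B, B = pinv S := ⟨_, rfl⟩
  rw [← hBdef] at hC hp1 hp2 hp3 hp4
  obtain ⟨w, hwdef⟩ : ∃ w, w = B *ᵥ (Dᵀ *ᵥ g) := ⟨_, rfl⟩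
  have hSw : S *ᵥ w = Dᵀ *ᵥ g := by
    obtain ⟨z, hz⟩ := hrange
    rw [hwdef, ← hz, Matrix.mulVec_mulVec, Matrix.mulVec_mulVec, hp1]
  obtain ⟨c, hcdef⟩ : ∃ x : ℝ, x = g ⬝ᵥ C *ᵥ g := ⟨_, rfl⟩
  have hc_eq : c = (Dᵀ *ᵥ g) ⬝ᵥ w := by
    rw [hcdef, hC, Matrix.mul_assoc, ← Matrix.mulVec_mulVec, ← Matrix.mulVec_mulVec,
      dot_shift, hwdef]
  have p1 : (D *ᵥ w) ⬝ᵥ A *ᵥ (D *ᵥ w) = c := by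
    rw [Matrix.mulVec_mulVec, dot_shift, Matrix.transpose_mul, hAt,
      Matrix.mulVec_mulVec, ← hSdef, hSw, hc_eq]
  have p2 : g ⬝ᵥ A *ᵥ (D *ᵥ w) = nn := by
    rw [Matrix.mulVec_mulVec, dot_shift, Matrix.transpose_mul, hAt]
    conv_lhs => rw [hu₀]
    rw [Matrix.mulVec_mulVec, ← hSdef,
      show (S *ᵥ u₀) ⬝ᵥ w = u₀ ⬝ᵥ (S *ᵥ w) from by rw [dot_shift S u₀ w, hSt],
      hSw, dot_shift, Matrix.transpose_transpose, ← hu₀]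
    exact hnn.symm
  have p3 : (D *ᵥ w) ⬝ᵥ A *ᵥ g = nn := by
    rw [sym_dot hAt]
    exact p2
  have hF1 : nn ^ 2 ≤ c * gA := by
    have hexp : 0 ≤ (gA • (D *ᵥ w) - nn • g) ⬝ᵥ A *ᵥ (gA • (D *ᵥ w) - nn • g) :=
      possemidef_dot hA.posSemidef _
    have hexpand : (gA • (D *ᵥ w) - nn • g) ⬝ᵥ A *ᵥ (gA • (D *ᵥ w) - nn • g)
        = gA * gA * c - gA * nn * nn - nn * gA * nn + nn * nn * gA := by
      simp only [Matrix.mulVec_sub, Matrix.mulVec_smul, sub_dotProduct,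
        dotProduct_sub, smul_dotProduct, dotProduct_smul,
        smul_eq_mul]
      rw [p1, p2, p3, ← hgAdef]
      ring
    rw [hexpand] at hexp
    nlinarith [hexp, hgA0]
  -- Step 2 : gA ≤ κhi * gH
  have hq1 : g ⬝ᵥ (A * H⁻¹ * A) *ᵥ g ≤ κhi * gA := by
    have hx := herm_quad_le hKherm hκ_le (R *ᵥ g)
    have e1 : (R *ᵥ g) ⬝ᵥ K *ᵥ (R *ᵥ g) = g ⬝ᵥ (A * H⁻¹ * A) *ᵥ g := by
      rw [Matrix.mulVec_mulVec, dot_shift, Matrix.transpose_mul, hKt, hRt,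
        Matrix.mulVec_mulVec, dotProduct_comm]
      have hRKR : R * K * R = A * H⁻¹ * A := by
        rw [hK,
          show R * (R * H⁻¹ * R) * R = R * R * H⁻¹ * (R * R) from by
            simp only [Matrix.mul_assoc],
          hR2]
      rw [hRKR]
    have e2 : (R *ᵥ g) ⬝ᵥ (R *ᵥ g) = gA := by
      rw [dot_shift, hRt, Matrix.mulVec_mulVec, hR2, dotProduct_comm, ← hgAdef]
    rw [e1, e2] at hx
    exact hx
  have hF2 : gA ≤ κhi * gH := by
    obtain ⟨p, hpdef⟩ : ∃ x : ℝ, x = g ⬝ᵥ (A * H⁻¹ * A) *ᵥ g := ⟨_, rfl⟩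
    rw [← hpdef] at hq1
    have i1 : (A *ᵥ g) ⬝ᵥ H⁻¹ *ᵥ (A *ᵥ g) = p := by
      rw [Matrix.mulVec_mulVec, dot_shift, Matrix.transpose_mul, hHinvt, hAt,
        Matrix.mulVec_mulVec, dotProduct_comm, hpdef]
    have i2 : (A *ᵥ g) ⬝ᵥ H⁻¹ *ᵥ (H *ᵥ g) = gA := by
      rw [Matrix.mulVec_mulVec, Matrix.nonsing_inv_mul H hHdetu, Matrix.one_mulVec,
        dotProduct_comm, ← hgAdef]
    have i3 : (H *ᵥ g) ⬝ᵥ H⁻¹ *ᵥ (A *ᵥ g) = gA := by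
      rw [sym_dot hHinvt, i2]
    have i4 : (H *ᵥ g) ⬝ᵥ H⁻¹ *ᵥ (H *ᵥ g) = gH := by
      rw [Matrix.mulVec_mulVec, Matrix.nonsing_inv_mul H hHdetu, Matrix.one_mulVec,
        dotProduct_comm, ← hgHdef]
    have hexp : 0 ≤ (gH • (A *ᵥ g) - gA • (H *ᵥ g)) ⬝ᵥ
        H⁻¹ *ᵥ (gH • (A *ᵥ g) - gA • (H *ᵥ g)) :=
      possemidef_dot hHinvPD.posSemidef _
    have hexpand : (gH • (A *ᵥ g) - gA • (H *ᵥ g)) ⬝ᵥ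
        H⁻¹ *ᵥ (gH • (A *ᵥ g) - gA • (H *ᵥ g))
        = gH * gH * p - gH * gA * gA - gA * gH * gA + gA * gA * gH := by
      simp only [Matrix.mulVec_sub, Matrix.mulVec_smul, sub_dotProduct,
        dotProduct_sub, smul_dotProduct, dotProduct_smul,
        smul_eq_mul]
      rw [i1, i2, i3, i4]
      ring
    rw [hexpand] at hexp
    have hcs : gA ^ 2 ≤ p * gH := by nlinarith [hexp, hgH0]
    have h7 : p * gH ≤ (κhi * gA) * gH := mul_le_mul_of_nonneg_right hq1 hgH0.le
    have h8 : gA * gA ≤ κhi * gH * gA := by nlinarith [hcs, h7]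
    exact le_of_mul_le_mul_right h8 hgA0
  -- Step 3 : Kantorovich for H
  have hF3 : gH * gHinv ≤ (σlo + σhi) ^ 2 / (4 * σlo * σhi) * nn ^ 2 := by
    obtain ⟨U, hU⟩ : ∃ U, U = (hH.1.eigenvectorUnitary : Matrix (Fin N) (Fin N) ℝ) :=
      ⟨_, rfl⟩
    have hU1 : star U * U = 1 := by
      rw [hU]; exact Matrix.mem_unitaryGroup_iff'.mp hH.1.eigenvectorUnitary.2
    have hU2 : U * star U = 1 := by
      rw [hU]; exact Matrix.mem_unitaryGroup_iff.mp hH.1.eigenvectorUnitary.2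
    have hHspec : H = U * Matrix.diagonal d * star U := by
      rw [hU, hd]; exact spectral_real hH.1
    have hHinvspec : H⁻¹ = U * Matrix.diagonal (fun i => (d i)⁻¹) * star U := by
      apply Matrix.inv_eq_right_inv
      rw [hHspec, conjmul_aux hU1, Matrix.diagonal_mul_diagonal]
      have hone : (fun i => d i * (d i)⁻¹) = fun _ : Fin N => (1:ℝ) :=
        funext fun i => mul_inv_cancel₀ (hdpos i).ne'
      rw [hone, Matrix.diagonal_one, Matrix.mul_one, hU2]
    obtain ⟨y, hy⟩ : ∃ y, y = star U *ᵥ g := ⟨_, rfl⟩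
    have ehH : gH = ∑ i, d i * (y i) ^ 2 := by
      rw [hgHdef, hy]
      exact quad_diag_coords d hHspec g
    have ehHinv : gHinv = ∑ i, (d i)⁻¹ * (y i) ^ 2 := by
      rw [hgHinvdef, hy]
      exact quad_diag_coords _ hHinvspec g
    have ehnn : nn = ∑ i, (y i) ^ 2 := by
      rw [hnn, ← dot_norm_eq hU2 g, hy]
      simp only [dotProduct]
      exact Finset.sum_congr rfl fun i _ => by ring
    rw [ehH, ehHinv, ehnn]
    exact kantorovich_sum d y σlo σhi hσlo0 hσhi0 hσlo_le hle_σhi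
  -- Final assembly
  have hc0 : 0 ≤ c := by nlinarith [hF1, hnn0, hgA0]
  rw [show g ⬝ᵥ C.mulVec g = c from hcdef.symm,
    show g ⬝ᵥ H⁻¹.mulVec g = gHinv from hgHinvdef.symm]
  rw [div_le_div_iff₀ (by positivity) hgHinv0]
  have h6 : 4 * σlo * σhi * (gH * gHinv) ≤ (σlo + σhi) ^ 2 * nn ^ 2 := by
    have h := mul_le_mul_of_nonneg_left hF3 (by positivity : (0:ℝ) ≤ 4 * σlo * σhi)
    calc 4 * σlo * σhi * (gH * gHinv)
        ≤ 4 * σlo * σhi * ((σlo + σhi) ^ 2 / (4 * σlo * σhi) * nn ^ 2) := h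
      _ = (σlo + σhi) ^ 2 * nn ^ 2 := by field_simp
  have h5 : nn ^ 2 ≤ c * (κhi * gH) :=
    le_trans hF1 (by nlinarith [hF2, hc0])
  apply le_of_mul_le_mul_right _ hgH0
  calc 4 * σlo * σhi * gHinv * gH = 4 * σlo * σhi * (gH * gHinv) := by ring
    _ ≤ (σlo + σhi) ^ 2 * nn ^ 2 := h6
    _ ≤ (σlo + σhi) ^ 2 * (c * (κhi * gH)) := by nlinarith [h5, hc0]
    _ = c * (κhi * (σlo + σhi) ^ 2) * gH := by ring
end

section
/- Under Assumptions 1 and 2, the series ∑_{n=1}^{∞} (h_{n+1} − h_n)ᵀ A_n(h_n) (h_{n+1} − h_n) converges (its nonnegative terms are summable), and the real sequence (F_n(h_n))_{n≥1} converges. -/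
open Matrix Filter Topology

noncomputable section
namespace MMaux
variable {N : ℕ}

lemma ofEuc_apply (v : EuclideanSpace ℝ (Fin N)) (i : Fin N) : ofEuc v i = v i := rfl
lemma ofEuc_smul (c : ℝ) (v : EuclideanSpace ℝ (Fin N)) : ofEuc (c • v) = c • ofEuc v := rfl
lemma ofEuc_sub (a b : EuclideanSpace ℝ (Fin N)) : ofEuc (a - b) = ofEuc a - ofEuc b := rfl
lemma ofEuc_toEuc (v : Fin N → ℝ) : ofEuc (toEuc v) = v := rfl
lemma toEuc_add (a b : Fin N → ℝ) : toEuc (a + b) = toEuc a + toEuc b := rfl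
lemma toEuc_smul (c : ℝ) (a : Fin N → ℝ) : toEuc (c • a) = c • toEuc a := rfl
lemma toEuc_sub (a b : Fin N → ℝ) : toEuc (a - b) = toEuc a - toEuc b := rfl

lemma qf_smul (M : Matrix (Fin N) (Fin N) ℝ) (c : ℝ) (v : EuclideanSpace ℝ (Fin N)) :
    qf M (c • v) = c^2 * qf M v := by
  simp only [qf, ofEuc_smul, Matrix.mulVec_smul, smul_dotProduct, dotProduct_smul,
    smul_eq_mul]
  ring

lemma qf_add_matrix (M₁ M₂ : Matrix (Fin N) (Fin N) ℝ) (v : EuclideanSpace ℝ (Fin N)) :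
    qf (M₁ + M₂) v = qf M₁ v + qf M₂ v := by
  simp [qf, Matrix.add_mulVec, dotProduct_add]

lemma qf_zero (M : Matrix (Fin N) (Fin N) ℝ) : qf M 0 = 0 := by
  simp [qf, ofEuc]

lemma qf_nonneg {M : Matrix (Fin N) (Fin N) ℝ} (hM : M.PosSemidef)
    (v : EuclideanSpace ℝ (Fin N)) : 0 ≤ qf M v := by
  have := hM.dotProduct_mulVec_nonneg (ofEuc v)
  simpa [qf] using this

lemma dot_eq_inner (a b : EuclideanSpace ℝ (Fin N)) :
    ofEuc a ⬝ᵥ ofEuc b = (inner ℝ a b : ℝ) := by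
  rw [PiLp.inner_apply]
  simp [dotProduct, ofEuc_apply, mul_comm]

lemma abs_dot_le (a b : EuclideanSpace ℝ (Fin N)) :
    |ofEuc a ⬝ᵥ ofEuc b| ≤ ‖a‖ * ‖b‖ := by
  rw [dot_eq_inner]; exact abs_real_inner_le_norm a b

lemma abs_entry_le_norm (v : EuclideanSpace ℝ (Fin N)) (i : Fin N) : |v i| ≤ ‖v‖ := by
  have h1 : |v i| = Real.sqrt ((v i)^2) := by
    rw [Real.sqrt_sq_eq_abs]
  rw [h1, EuclideanSpace.norm_eq]
  apply Real.sqrt_le_sqrt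
  have : (v i)^2 ≤ ∑ j, ‖v j‖^2 := by
    have := Finset.single_le_sum (f := fun j => ‖v j‖^2)
      (fun j _ => by positivity) (Finset.mem_univ i)
    simpa [Real.norm_eq_abs, sq_abs] using this
  simpa using this

lemma qf_eq_sum (M : Matrix (Fin N) (Fin N) ℝ) (v : EuclideanSpace ℝ (Fin N)) :
    qf M v = ∑ i, ∑ j, v i * (M i j * v j) := by
  simp [qf, dotProduct, Matrix.mulVec, ofEuc_apply, Finset.mul_sum]

lemma abs_qf_le (M : Matrix (Fin N) (Fin N) ℝ) (v : EuclideanSpace ℝ (Fin N)) :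
    |qf M v| ≤ (∑ i, ∑ j, |M i j|) * ‖v‖^2 := by
  rw [qf_eq_sum, Finset.sum_mul]
  refine (Finset.abs_sum_le_sum_abs _ _).trans (Finset.sum_le_sum fun i _ => ?_)
  rw [Finset.sum_mul]
  refine (Finset.abs_sum_le_sum_abs _ _).trans (Finset.sum_le_sum fun j _ => ?_)
  rw [abs_mul, abs_mul]
  calc |v i| * (|M i j| * |v j|) = |M i j| * (|v i| * |v j|) := by ring
    _ ≤ |M i j| * (‖v‖ * ‖v‖) := by
        apply mul_le_mul_of_nonneg_left _ (abs_nonneg _)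
        exact mul_le_mul (abs_entry_le_norm v i) (abs_entry_le_norm v j) (abs_nonneg _) (norm_nonneg _)
    _ = |M i j| * ‖v‖^2 := by ring

lemma qf_continuous (M : Matrix (Fin N) (Fin N) ℝ) : Continuous (qf M) := by
  have : qf M = fun v : EuclideanSpace ℝ (Fin N) => ∑ i, ∑ j, v i * (M i j * v j) := by
    funext v; exact qf_eq_sum M v
  rw [this]
  refine continuous_finset_sum _ fun i _ => continuous_finset_sum _ fun j _ => ?_
  have hv : ∀ k : Fin N, Continuous fun v : EuclideanSpace ℝ (Fin N) => v k := by
    intro k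
    exact (PiLp.proj (𝕜 := ℝ) 2 (fun _ : Fin N => ℝ) k).continuous
  exact (hv i).mul (continuous_const.mul (hv j))

lemma posdef_lower (hN : 0 < N) {R : Matrix (Fin N) (Fin N) ℝ} (hR : R.PosDef) :
    ∃ μ > 0, ∀ v : EuclideanSpace ℝ (Fin N), μ * ‖v‖^2 ≤ qf R v := by
  have hnt : Nontrivial (EuclideanSpace ℝ (Fin N)) := by
    refine ⟨⟨EuclideanSpace.single ⟨0, hN⟩ (1:ℝ), 0, ?_⟩⟩
    intro h
    have := congrArg (fun v : EuclideanSpace ℝ (Fin N) => v ⟨0, hN⟩) h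
    simpa using this
  have hsne : (Metric.sphere (0 : EuclideanSpace ℝ (Fin N)) 1).Nonempty :=
    NormedSpace.sphere_nonempty.mpr zero_le_one
  obtain ⟨x₀, hx₀s, hx₀min⟩ := (isCompact_sphere (0 : EuclideanSpace ℝ (Fin N)) 1).exists_isMinOn
    hsne (qf_continuous R).continuousOn
  have hx₀ : ‖x₀‖ = 1 := by simpa using hx₀s
  have hx₀ne : x₀ ≠ 0 := by intro h; rw [h] at hx₀; simp at hx₀
  have hμpos : 0 < qf R x₀ := by
    have := hR.dotProduct_mulVec_pos (x := ofEuc x₀) (by intro h; exact hx₀ne (by ext i; exact congrFun h i))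
    simpa [qf] using this
  refine ⟨qf R x₀, hμpos, fun v => ?_⟩
  rcases eq_or_ne v 0 with rfl | hv
  · simp [qf_zero]
  · have hnv : 0 < ‖v‖ := norm_pos_iff.mpr hv
    have hy : (‖v‖⁻¹ • v) ∈ Metric.sphere (0 : EuclideanSpace ℝ (Fin N)) 1 := by
      simp [norm_smul, abs_of_pos (inv_pos.mpr hnv), inv_mul_cancel₀ hnv.ne']
    have this : qf R x₀ ≤ qf R (‖v‖⁻¹ • v) := hx₀min hy
    have hqv : qf R (‖v‖⁻¹ • v) = (‖v‖⁻¹)^2 * qf R v := qf_smul R _ v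
    rw [hqv] at this
    have h2 : qf R x₀ * ‖v‖^2 ≤ (‖v‖⁻¹)^2 * qf R v * ‖v‖^2 :=
      mul_le_mul_of_nonneg_right this (by positivity)
    calc qf R x₀ * ‖v‖^2 ≤ (‖v‖⁻¹)^2 * qf R v * ‖v‖^2 := h2
      _ = qf R v := by field_simp
end MMaux
end


set_option maxHeartbeats 1000000 in
theorem mm_decrease_summable_and_Fn_converges
    {N : ℕ} (hN : 0 < N)
    (R : Matrix (Fin N) (Fin N) ℝ) (hRpd : R.PosDef)
    (r : EuclideanSpace ℝ (Fin N))
    (Ψ : EuclideanSpace ℝ (Fin N) → ℝ)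
    (hΨbdd : BddBelow (Set.range Ψ))
    (hΨconv : ConvexOn ℝ Set.univ Ψ)
    (hΨC2 : ContDiff ℝ 2 Ψ)
    (gradΨ : EuclideanSpace ℝ (Fin N) → EuclideanSpace ℝ (Fin N))
    (hgradΨ : ∀ x, HasGradientAt Ψ (gradΨ x) x)
    (hessΨ : EuclideanSpace ℝ (Fin N) → Matrix (Fin N) (Fin N) ℝ)
    (hhessΨ : ∀ x, HasFDerivAt gradΨ
      (LinearMap.toContinuousLinearMap (Matrix.toEuclideanLin (hessΨ x))) x)
    (F : EuclideanSpace ℝ (Fin N) → ℝ)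
    (hF : ∀ x, F x = (1/2) * qf R x - ofEuc r ⬝ᵥ ofEuc x + Ψ x)
    (Rn : ℕ → Matrix (Fin N) (Fin N) ℝ) (hRnpsd : ∀ n, (Rn n).PosSemidef)
    (rn : ℕ → EuclideanSpace ℝ (Fin N))
    (Fn : ℕ → EuclideanSpace ℝ (Fin N) → ℝ)
    (hFn : ∀ n x, Fn n x = (1/2) * qf (Rn n) x - ofEuc (rn n) ⬝ᵥ ofEuc x + Ψ x)
    (B : EuclideanSpace ℝ (Fin N) → Matrix (Fin N) (Fin N) ℝ)
    (hBpsd : ∀ x, (B x).PosSemidef)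
    (An : ℕ → EuclideanSpace ℝ (Fin N) → Matrix (Fin N) (Fin N) ℝ)
    (hAn : ∀ n x, An n x = Rn n + B x)
    (gradFn : ℕ → EuclideanSpace ℝ (Fin N) → EuclideanSpace ℝ (Fin N))
    (hgradFn : ∀ n x, HasGradientAt (Fn n) (gradFn n x) x)
    (Θ : ℕ → EuclideanSpace ℝ (Fin N) → EuclideanSpace ℝ (Fin N) → ℝ)
    (hΘ : ∀ n x y, Θ n x y =
      Fn n y + ofEuc (gradFn n y) ⬝ᵥ ofEuc (x - y) + (1/2) * qf (An n y) (x - y))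
    (M : ℕ → ℕ) (D : (n : ℕ) → Matrix (Fin N) (Fin (M n)) ℝ)
    (h : ℕ → EuclideanSpace ℝ (Fin N))
    (halg : ∀ n, h (n+1) ∈ rangeD (D n) ∧
      ∀ y ∈ rangeD (D n), Θ n (h (n+1)) (h n) ≤ Θ n y (h n))
    (hmaj : ∀ n x, Fn n x ≤ Θ n x (h n))
    (ha1r : Summable (fun n => ‖rn n - rn (n+1)‖))
    (ha1R : ∀ i j, Summable (fun n => |Rn n i j - Rn (n+1) i j|))
    (ha1rlim : Tendsto rn atTop (𝓝 r))
    (ha1Rlim : ∀ i j, Tendsto (fun n => Rn n i j) atTop (𝓝 (R i j)))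
    (ha2i : ∀ n, gradFn n (h n) ∈ rangeD (D n) ∧ h n ∈ rangeD (D n))
    (V : Matrix (Fin N) (Fin N) ℝ) (hVpd : V.PosDef)
    (ha2ii : ∀ x, (B x - hessΨ x).PosSemidef ∧ (V - B x).PosSemidef)
    (ha2iii : (∀ n, rn n = r ∧ Rn n = R) ∨
      (∃ c : ℝ, ∀ x, ‖mulE (B x) x - gradΨ x‖ ≤ c))
    :
    Summable (fun n => qf (An n (h n)) (h (n+1) - h n)) ∧
    ∃ L : ℝ, Tendsto (fun n => Fn n (h n)) atTop (𝓝 L) := by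
    -- abbreviations
    obtain ⟨q, hqdef⟩ : ∃ q : ℕ → ℝ, q = fun n => qf (An n (h n)) (h (n+1) - h n) := ⟨_, rfl⟩
    obtain ⟨a, hadef⟩ : ∃ a : ℕ → ℝ, a = fun n => Fn n (h n) := ⟨_, rfl⟩
    have hAnpsd : ∀ n x, (An n x).PosSemidef := fun n x => by
      rw [hAn]; exact (hRnpsd n).add (hBpsd x)
    have hqnonneg : ∀ n, 0 ≤ q n := by
      intro n
      rw [hqdef]
      exact MMaux.qf_nonneg (hAnpsd n (h n)) _
    -- Step 2: key decrease inequality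
    have hkey : ∀ n, Fn n (h (n+1)) + (1/2) * q n ≤ Fn n (h n) := by
      intro n
      obtain ⟨u₁, hu₁⟩ := (halg n).1
      obtain ⟨u₀, hu₀⟩ := (ha2i n).2
      obtain ⟨en, hen⟩ : ∃ en : EuclideanSpace ℝ (Fin N), en = h (n+1) - h n := ⟨_, rfl⟩
      obtain ⟨aa, haa⟩ : ∃ aa : ℝ, aa = ofEuc (gradFn n (h n)) ⬝ᵥ ofEuc en := ⟨_, rfl⟩
      have hline : ∀ t : ℝ, (h n + t • en) ∈ rangeD (D n) := by
        intro t
        refine ⟨u₀ + t • (u₁ - u₀), ?_⟩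
        rw [Matrix.mulVec_add, Matrix.mulVec_smul, Matrix.mulVec_sub, MMaux.toEuc_add,
          MMaux.toEuc_smul, MMaux.toEuc_sub, ← hu₀, ← hu₁, hen]
      have hφ : ∀ t : ℝ, Θ n (h n + t • en) (h n)
          = Fn n (h n) + t * aa + t^2 * ((1/2) * q n) := by
        intro t
        rw [hΘ]
        have h1 : h n + t • en - h n = t • en := by abel
        rw [h1, MMaux.ofEuc_smul, dotProduct_smul, MMaux.qf_smul]
        have hq' : q n = qf (An n (h n)) en := by
          rw [hqdef, hen]
        rw [← hq', ← haa, smul_eq_mul]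
        ring
      have h1' : h (n+1) = h n + (1:ℝ) • en := by rw [one_smul, hen]; abel
      have hΘ1 : Θ n (h (n+1)) (h n) = Fn n (h n) + 1*aa + 1^2*((1/2) * q n) := by
        conv_lhs => rw [h1']
        exact hφ 1
      have hmin : ∀ t : ℝ, aa + (1/2) * q n ≤ t * aa + t^2 * ((1/2) * q n) := by
        intro t
        have hm := (halg n).2 (h n + t • en) (hline t)
        rw [hΘ1, hφ t] at hm
        nlinarith [hm]
      have hq0 : 0 ≤ q n := hqnonneg n
      have hclaim : aa + q n ≤ 0 := by
        by_contra hcon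
        push_neg at hcon
        obtain ⟨ε, hεdef⟩ : ∃ ε : ℝ, ε = (aa + q n)/(q n + 1) := ⟨_, rfl⟩
        have hq1 : (0:ℝ) < q n + 1 := by linarith
        have hεpos : 0 < ε := by rw [hεdef]; exact div_pos hcon hq1
        have hεq : ε * (q n + 1) = aa + q n := by
          rw [hεdef]; exact div_mul_cancel₀ _ hq1.ne'
        have hm := hmin (1 - ε)
        have h2 : ε * (aa + q n) ≤ ε^2 * (q n) / 2 := by nlinarith [hm]
        have h3 : ε * (aa + q n) = ε^2 * (q n + 1) := by
          rw [← hεq]; ring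
        nlinarith [mul_pos hεpos hεpos]
      have hupper : Fn n (h (n+1)) ≤ Fn n (h n) + aa + (1/2) * q n := by
        have hm := hmaj n (h (n+1))
        rw [hΘ1] at hm
        linarith
      linarith
    -- Step 3: perturbation bound
    obtain ⟨ΔR, hΔRdef⟩ : ∃ F : ℕ → ℝ, F = fun n => ∑ i, ∑ j, |Rn n i j - Rn (n+1) i j| := ⟨_, rfl⟩
    obtain ⟨εp, hεpdef⟩ : ∃ F : ℕ → ℝ, F = fun n => (1/2) * ΔR n + ‖rn n - rn (n+1)‖ := ⟨_, rfl⟩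
    have hΔRnonneg : ∀ n, 0 ≤ ΔR n := by
      intro n
      rw [hΔRdef]
      apply Finset.sum_nonneg; intro i _; apply Finset.sum_nonneg; intro j _; positivity
    have hεpnonneg : ∀ n, 0 ≤ εp n := fun n => by
      have := hΔRnonneg n; have := norm_nonneg (rn n - rn (n+1)); simp only [hεpdef]; positivity
    have hΔRsum : Summable ΔR := by
      rw [hΔRdef]
      apply summable_sum; intro i _; apply summable_sum; intro j _; exact ha1R i j
    have hεpsum : Summable εp := by
      rw [hεpdef]; exact (hΔRsum.mul_left _).add ha1r
    have hpert : ∀ n x, Fn (n+1) x ≤ Fn n x + εp n * (1 + 2*‖x‖^2) := by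
      intro n x
      rw [hFn, hFn]
      have hsplit : qf (Rn (n+1)) x = qf (Rn n) x + qf (Rn (n+1) - Rn n) x := by
        rw [← MMaux.qf_add_matrix]; congr 1; abel
      have hdots : ofEuc (rn (n+1)) ⬝ᵥ ofEuc x
          = ofEuc (rn n) ⬝ᵥ ofEuc x + ofEuc (rn (n+1) - rn n) ⬝ᵥ ofEuc x := by
        rw [MMaux.ofEuc_sub, sub_dotProduct]; ring
      have h1 : |qf (Rn (n+1) - Rn n) x| ≤ ΔR n * ‖x‖^2 := by
        refine (MMaux.abs_qf_le _ x).trans ?_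
        have he : (∑ i, ∑ j, |(Rn (n+1) - Rn n) i j|) = ΔR n := by
          simp [hΔRdef, Matrix.sub_apply, abs_sub_comm]
        rw [he]
      have h2 : |ofEuc (rn (n+1) - rn n) ⬝ᵥ ofEuc x| ≤ ‖rn n - rn (n+1)‖ * ‖x‖ := by
        have := MMaux.abs_dot_le (rn (n+1) - rn n) x
        rwa [norm_sub_rev] at this
      have hx1 : ‖x‖ ≤ 1 + ‖x‖^2 := by nlinarith [norm_nonneg x, sq_nonneg (‖x‖ - 1)]
      have hxs : (0:ℝ) ≤ ‖x‖^2 := sq_nonneg _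
      have hdr : (0:ℝ) ≤ ‖rn n - rn (n+1)‖ := norm_nonneg _
      have hΔ := hΔRnonneg n
      rw [hsplit, hdots]
      simp only [hεpdef]
      nlinarith [abs_le.mp h1, abs_le.mp h2, norm_nonneg x]
    -- Step 4: coercivity
    obtain ⟨μ, hμpos, hμ⟩ := MMaux.posdef_lower hN hRpd
    obtain ⟨δ, hδdef⟩ : ∃ F : ℕ → ℝ, F = fun n => ∑ i, ∑ j, |Rn n i j - R i j| := ⟨_, rfl⟩
    have hδ0 : Tendsto δ atTop (𝓝 0) := by
      rw [hδdef]
      have : Tendsto (fun n => ∑ i, ∑ j, |Rn n i j - R i j|) atTop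
          (𝓝 (∑ i : Fin N, ∑ j : Fin N, (0:ℝ))) := by
        apply tendsto_finset_sum; intro i _
        apply tendsto_finset_sum; intro j _
        have h1 : Tendsto (fun n => Rn n i j - R i j) atTop (𝓝 (R i j - R i j)) :=
          (ha1Rlim i j).sub tendsto_const_nhds
        have h2 := h1.abs
        simpa using h2
      simpa using this
    obtain ⟨n₀, hn₀⟩ : ∃ n₀, ∀ n ≥ n₀, δ n ≤ μ/2 := by
      have := hδ0 (Iio_mem_nhds (show (0:ℝ) < μ/2 by positivity))
      rw [Filter.mem_map, Filter.mem_atTop_sets] at this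
      obtain ⟨n₀, hn₀⟩ := this
      exact ⟨n₀, fun n hn => le_of_lt (hn₀ n hn)⟩
    obtain ⟨K, hK⟩ : ∃ K : ℝ, ∀ n, ‖rn n‖ ≤ K := by
      have hb : BddAbove (Set.range fun n => ‖rn n‖) :=
        (ha1rlim.norm).bddAbove_range
      obtain ⟨K, hK⟩ := hb
      exact ⟨K, fun n => hK ⟨n, rfl⟩⟩
    have hK0 : 0 ≤ K := le_trans (norm_nonneg _) (hK 0)
    obtain ⟨cΨ, hcΨ⟩ := hΨbdd
    have hcΨ' : ∀ x, cΨ ≤ Ψ x := fun x => hcΨ ⟨x, rfl⟩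
    obtain ⟨C0, hC0def⟩ : ∃ c : ℝ, c = 2*K^2/μ - cΨ := ⟨_, rfl⟩
    have hcoer : ∀ n, n₀ ≤ n → ∀ x, (μ/8)*‖x‖^2 - C0 ≤ Fn n x := by
      intro n hn x
      rw [hFn, hC0def]
      have hsplit : qf (Rn n) x = qf R x + qf (Rn n - R) x := by
        rw [← MMaux.qf_add_matrix]; congr 1; abel
      have h1 : |qf (Rn n - R) x| ≤ δ n * ‖x‖^2 := by
        refine (MMaux.abs_qf_le _ x).trans ?_
        have he : (∑ i, ∑ j, |(Rn n - R) i j|) = δ n := by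
          simp [hδdef, Matrix.sub_apply]
        rw [he]
      have h2 : μ*‖x‖^2 ≤ qf R x := hμ x
      have h3 : |ofEuc (rn n) ⬝ᵥ ofEuc x| ≤ K * ‖x‖ :=
        (MMaux.abs_dot_le _ x).trans (mul_le_mul_of_nonneg_right (hK n) (norm_nonneg x))
      have h4 : cΨ ≤ Ψ x := hcΨ' x
      have hδn : δ n ≤ μ/2 := hn₀ n hn
      have hCid : μ * (2*K^2/μ) = 2*K^2 := by field_simp
      rw [hsplit]
      have hquad : (0:ℝ) ≤ (μ*‖x‖ - 4*K)^2 := sq_nonneg _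
      have hgoal : (μ/8)*‖x‖^2 - 2*K^2/μ ≤ (μ/4)*‖x‖^2 - K*‖x‖ := by
        have hid : 2*K^2/μ * μ = 2*K^2 := div_mul_cancel₀ _ hμpos.ne'
        nlinarith [hquad, hμpos, hid, sq_nonneg ‖x‖]
      nlinarith [abs_le.mp h1, abs_le.mp h3, sq_nonneg ‖x‖, hμpos]
    -- Step 5: one-step inequality
    have hstep : ∀ n, a (n+1) ≤ a n + εp n * (1 + 2*‖h (n+1)‖^2) := by
      intro n
      have h1 := hpert n (h (n+1))
      have h2 := hkey n
      have h3 := hqnonneg n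
      simp only [hadef]
      linarith
    -- Step 6: boundedness of the iterates
    obtain ⟨u, hudef⟩ : ∃ F : ℕ → ℝ, F = fun n => a n + C0 := ⟨_, rfl⟩
    have hunn : ∀ n, n₀ ≤ n → (μ/8)*‖h n‖^2 ≤ u n := by
      intro n hn
      have := hcoer n hn (h n)
      simp only [hudef, hadef]
      linarith
    have hu0 : ∀ n, n₀ ≤ n → 0 ≤ u n := fun n hn => le_trans (by positivity) (hunn n hn)
    obtain ⟨n₁', hn₁'⟩ : ∃ m, ∀ n ≥ m, εp n ≤ μ/32 := by
      have := hεpsum.tendsto_atTop_zero (Iio_mem_nhds (show (0:ℝ) < μ/32 by positivity))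
      rw [Filter.mem_map, Filter.mem_atTop_sets] at this
      obtain ⟨m, hm⟩ := this
      exact ⟨m, fun n hn => le_of_lt (hm n hn)⟩
    obtain ⟨n₁, hn₁def⟩ : ∃ m : ℕ, m = max n₀ n₁' := ⟨_, rfl⟩
    obtain ⟨d, hddef⟩ : ∃ c : ℝ, c = 32/μ := ⟨_, rfl⟩
    have hd0 : (0:ℝ) ≤ d := by rw [hddef]; positivity
    have hgron : ∀ n, n₁ ≤ n → u (n+1) + 1 ≤ (u n + 1) * Real.exp ((1 + d) * εp n) := by
      intro n hn
      have hn0 : n₀ ≤ n := le_trans (hn₁def ▸ le_max_left n₀ n₁') hn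
      have hn0' : n₀ ≤ n + 1 := le_trans hn0 (Nat.le_succ n)
      have hεn : εp n ≤ μ/32 := hn₁' n (le_trans (hn₁def ▸ le_max_right n₀ n₁') hn)
      have hun : 0 ≤ u n := hu0 n hn0
      have hun1 : 0 ≤ u (n+1) := hu0 _ hn0'
      have hε0 : 0 ≤ εp n := hεpnonneg n
      have hh : ‖h (n+1)‖^2 ≤ (8/μ) * u (n+1) := by
        have h1 := hunn (n+1) hn0'
        have h2 := mul_le_mul_of_nonneg_left h1 (le_of_lt (show (0:ℝ) < 8/μ by positivity))
        have h3 : (8/μ) * ((μ/8) * ‖h (n+1)‖^2) = ‖h (n+1)‖^2 := by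
          field_simp
        linarith
      have hstepn : u (n+1) ≤ u n + εp n * (1 + 2*‖h (n+1)‖^2) := by
        have := hstep n
        simp only [hudef]
        linarith
      have hA : u (n+1) ≤ u n + εp n + (16/μ) * εp n * u (n+1) := by
        have h2 : εp n * (1 + 2*‖h (n+1)‖^2) ≤ εp n * (1 + 2*((8/μ) * u (n+1))) :=
          mul_le_mul_of_nonneg_left (by linarith) hε0
        have h3 : εp n * (1 + 2*((8/μ) * u (n+1))) = εp n + (16/μ)*εp n*u (n+1) := by
          field_simp
          ring
        linarith [hstepn]
      have hcE : (16/μ) * εp n ≤ 1/2 := by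
        rw [div_mul_eq_mul_div, div_le_div_iff₀ hμpos (by norm_num : (0:ℝ) < 2)]
        linarith
      have hX2 : u (n+1) ≤ 2*(u n + εp n) := by
        have h5 := mul_le_mul_of_nonneg_right hcE hun1
        linarith [hA]
      have hcnn : (0:ℝ) ≤ (16/μ)*εp n := by positivity
      have h5 := mul_le_mul_of_nonneg_left hX2 hcnn
      have h6 : (16/μ)*εp n * (2*(u n + εp n)) = d * εp n * (u n + εp n) := by
        simp only [hddef]
        ring
      have hC : u (n+1) ≤ u n + εp n + d*εp n*(u n + εp n) := by linarith [hA]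
      have hpoly : u (n+1) + 1 ≤ (u n + 1) * (1 + εp n) * (1 + d*εp n) := by
        nlinarith [hC, mul_nonneg hun hε0, mul_nonneg hd0 hε0,
          mul_nonneg (mul_nonneg hd0 (mul_nonneg hun hε0)) hε0]
      have hexp1 : (1:ℝ) + εp n ≤ Real.exp (εp n) := by
        have := Real.add_one_le_exp (εp n); linarith
      have hexp2 : (1:ℝ) + d * εp n ≤ Real.exp (d * εp n) := by
        have := Real.add_one_le_exp (d*εp n); linarith
      calc u (n+1) + 1 ≤ (u n + 1) * (1 + εp n) * (1 + d * εp n) := hpoly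
        _ ≤ (u n + 1) * Real.exp (εp n) * Real.exp (d * εp n) := by
            have hb1 : (0:ℝ) ≤ 1 + d * εp n := by positivity
            have hb2 : (0:ℝ) ≤ (u n + 1) * Real.exp (εp n) := by positivity
            apply mul_le_mul _ hexp2 hb1 hb2
            exact mul_le_mul_of_nonneg_left hexp1 (by linarith)
        _ = (u n + 1) * Real.exp ((1 + d) * εp n) := by
            rw [mul_assoc, ← Real.exp_add]
            ring_nf
    obtain ⟨S, hSdef⟩ : ∃ c : ℝ, c = ∑' n, εp n := ⟨_, rfl⟩
    have hSsum : ∀ n, ∑ k ∈ Finset.Ico n₁ n, εp k ≤ S := by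
      intro n
      rw [hSdef]
      exact Summable.sum_le_tsum _ (fun k _ => hεpnonneg k) hεpsum
    have hu₁pos : (0:ℝ) < u n₁ + 1 := by
      have := hu0 n₁ (hn₁def ▸ le_max_left n₀ n₁'); linarith
    have hind : ∀ n, n₁ ≤ n →
        u n + 1 ≤ (u n₁ + 1) * Real.exp ((1+d) * ∑ k ∈ Finset.Ico n₁ n, εp k) := by
      intro n hn
      induction n, hn using Nat.le_induction with
      | base => simp
      | succ n hmn ih =>
        have h1 := hgron n hmn
        have h2 : (u n + 1) * Real.exp ((1+d) * εp n)
            ≤ ((u n₁ + 1) * Real.exp ((1+d) * ∑ k ∈ Finset.Ico n₁ n, εp k))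
              * Real.exp ((1+d)*εp n) :=
          mul_le_mul_of_nonneg_right ih (Real.exp_nonneg _)
        rw [Finset.sum_Ico_succ_top hmn]
        calc u (n+1) + 1 ≤ ((u n₁ + 1) * Real.exp ((1+d) * ∑ k ∈ Finset.Ico n₁ n, εp k))
              * Real.exp ((1+d)*εp n) := h1.trans h2
          _ = (u n₁ + 1) * Real.exp ((1+d) * ((∑ k ∈ Finset.Ico n₁ n, εp k) + εp n)) := by
              rw [mul_assoc, ← Real.exp_add]
              ring_nf
    obtain ⟨U, hUdef⟩ : ∃ c : ℝ, c = (u n₁ + 1) * Real.exp ((1+d) * S) := ⟨_, rfl⟩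
    have hubound : ∀ n, n₁ ≤ n → u n ≤ U := by
      intro n hn
      have h1 := hind n hn
      have h2 : (u n₁ + 1) * Real.exp ((1+d) * ∑ k ∈ Finset.Ico n₁ n, εp k) ≤ U := by
        simp only [hUdef]
        apply mul_le_mul_of_nonneg_left _ (le_of_lt hu₁pos)
        apply Real.exp_le_exp.mpr
        apply mul_le_mul_of_nonneg_left (hSsum n) (by positivity : (0:ℝ) ≤ 1+d)
      linarith
    obtain ⟨H2, hH2def⟩ : ∃ c : ℝ, c = (8/μ) * U := ⟨_, rfl⟩
    have hhbound : ∀ n, n₁ ≤ n → ‖h n‖^2 ≤ H2 := by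
      intro n hn
      have h1 := hunn n (le_trans (hn₁def ▸ le_max_left n₀ n₁') hn)
      have h2 := hubound n hn
      have h3 := mul_le_mul_of_nonneg_left (h1.trans h2)
        (le_of_lt (show (0:ℝ) < 8/μ by positivity))
      have h4 : (8/μ) * ((μ/8) * ‖h n‖^2) = ‖h n‖^2 := by
        field_simp
      simp only [hH2def]
      linarith
    -- Step 7: summable perturbation along the iterates
    obtain ⟨p, hpdef⟩ : ∃ F : ℕ → ℝ, F = fun n => εp n * (1 + 2*‖h (n+1)‖^2) := ⟨_, rfl⟩
    have hp0 : ∀ n, 0 ≤ p n := by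
      intro n
      rw [hpdef]
      exact mul_nonneg (hεpnonneg n) (by positivity)
    have hpsum : Summable p := by
      rw [← summable_nat_add_iff n₁]
      refine Summable.of_nonneg_of_le (fun k => hp0 _) (fun k => ?_)
        (((summable_nat_add_iff n₁).mpr hεpsum).mul_right (1 + 2*H2))
      simp only [hpdef]
      apply mul_le_mul_of_nonneg_left _ (hεpnonneg _)
      have := hhbound (k + n₁ + 1) (by omega)
      linarith
    -- Step 8: convergence of (a n)
    obtain ⟨tail, htaildef⟩ : ∃ F : ℕ → ℝ, F = fun n => ∑' k, p (k + n) := ⟨_, rfl⟩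
    have htailsummable : ∀ n, Summable fun k => p (k + n) :=
      fun n => (summable_nat_add_iff n).mpr hpsum
    have htailrec : ∀ n, tail n = p n + tail (n+1) := by
      intro n
      have h1 : ∑' (k:ℕ), p (k + n) = p (0 + n) + ∑' (k:ℕ), p ((k+1) + n) :=
        Summable.tsum_eq_zero_add (htailsummable n)
      have h2 : ∑' (k:ℕ), p ((k+1) + n) = ∑' (k:ℕ), p (k + (n+1)) :=
        tsum_congr (fun k => by congr 1; omega)
      simp only [htaildef]
      rw [h1, h2]
      simp
    have htail0 : Tendsto tail atTop (𝓝 0) := by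
      rw [htaildef]; exact tendsto_sum_nat_add p
    have htailnn : ∀ n, 0 ≤ tail n := by
      intro n
      rw [htaildef]
      exact tsum_nonneg (fun k => hp0 _)
    obtain ⟨P, hPdef⟩ : ∃ c : ℝ, c = ∑' n, p n := ⟨_, rfl⟩
    have htailleP : ∀ n, tail n ≤ P := by
      intro n
      rw [htaildef, hPdef]
      exact Summable.tsum_le_tsum_of_inj (fun k => k + n) (add_left_injective n) (fun c _ => hp0 c)
        (fun k => le_rfl) (htailsummable n) hpsum
    obtain ⟨v, hvdef⟩ : ∃ F : ℕ → ℝ, F = fun n => a n + tail n := ⟨_, rfl⟩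
    have hvanti : Antitone v := by
      apply antitone_nat_of_succ_le
      intro n
      have h1 := hstep n
      have h2 := htailrec n
      simp only [hpdef] at h2
      simp only [hvdef]
      linarith
    have hvlb : ∀ n, -C0 ≤ v n := by
      have key : ∀ m, n₀ ≤ m → -C0 ≤ v m := by
        intro m hm
        have h1 : 0 ≤ u m := hu0 m hm
        simp only [hudef] at h1
        have h2 := htailnn m
        simp only [hvdef]
        linarith
      intro n
      rcases le_total n₀ n with hle | hle
      · exact key n hle
      · exact le_trans (key n₀ le_rfl) (hvanti hle)
    have hvbdd : BddBelow (Set.range v) := ⟨-C0, by rintro y ⟨n, rfl⟩; exact hvlb n⟩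
    have hvconv : Tendsto v atTop (𝓝 (⨅ n, v n)) := tendsto_atTop_ciInf hvanti hvbdd
    have haconv : Tendsto a atTop (𝓝 (⨅ n, v n)) := by
      have heq : a = fun n => v n - tail n := by
        funext n
        simp only [hvdef]
        ring
      rw [heq]
      simpa using hvconv.sub htail0
    have halb : ∀ n, -C0 - P ≤ a n := by
      intro n
      have h1 := hvlb n
      have h2 := htailleP n
      simp only [hvdef] at h1
      linarith
    -- Conclusion
    have hsq : Summable q := by
      apply summable_of_sum_range_le (c := 2*(a 0 + C0 + P + P)) hqnonneg
      intro n
      have hqle : ∀ k, q k ≤ 2*((a k - a (k+1)) + p k) := by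
        intro k
        have h1 := hkey k
        have h2 := hpert k (h (k+1))
        simp only [hadef, hpdef]
        linarith
      calc ∑ i ∈ Finset.range n, q i
          ≤ ∑ i ∈ Finset.range n, (2*((a i - a (i+1)) + p i)) :=
            Finset.sum_le_sum (fun i _ => hqle i)
        _ = 2*((∑ i ∈ Finset.range n, (a i - a (i+1))) + ∑ i ∈ Finset.range n, p i) := by
            rw [← Finset.sum_add_distrib, Finset.mul_sum]
        _ = 2*((a 0 - a n) + ∑ i ∈ Finset.range n, p i) := by
            rw [Finset.sum_range_sub' a n]
        _ ≤ 2*(a 0 + C0 + P + P) := by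
            have h1 := halb n
            have h2 : ∑ i ∈ Finset.range n, p i ≤ P := by
              rw [hPdef]
              exact Summable.sum_le_tsum _ (fun k _ => hp0 k) hpsum
            linarith
    rw [hqdef] at hsq
    rw [hadef] at haconv
    exact ⟨hsq, ⟨⨅ n, v n, haconv⟩⟩
end
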